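/- arXiv:1704.06446 — 6 statements merged into one kernel-verified Lean document; each statement's English description precedes it below -/
import Mathlib

section
/- Let p ∈ (1,∞) and let f : ℝ → ℝ be a monotone function which is not almost everywhere equal to a constant. Then ‖f‖_{JN_p(ℝ)} = ∞; that is, for every K < ∞ there exists a bounded interval I ⊂ ℝ with |I| (⨍_I |f − ⟨f⟩_I|)^p > K. -/
open MeasureTheory ENNReal

/-- The `JN_p` sum associated to a countable collection of open intervals
`(aᵢ, bᵢ)`:  `Σᵢ |Iᵢ| (⨍_{Iᵢ} |f − ⟨f⟩_{Iᵢ}|)^p`, valued in `ℝ≥0∞`. -/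
noncomputable def jnSum (p : ℝ) (f : ℝ → ℝ) (a b : ℕ → ℝ) : ℝ≥0∞ :=
  ∑' i, volume (Set.Ioo (a i) (b i)) *
    ENNReal.ofReal ((⨍ x in Set.Ioo (a i) (b i), |f x - ⨍ y in Set.Ioo (a i) (b i), f y|) ^ p)

/-- The John–Nirenberg `JN_p` norm of `f` on the interval `I₀`, defined as the
`p`-th root of the supremum of `jnSum` over all countable collections of pairwise
disjoint bounded open subintervals of `I₀`. -/
noncomputable def eJN (p : ℝ) (I₀ : Set ℝ) (f : ℝ → ℝ) : ℝ≥0∞ :=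
  ⨆ (a : ℕ → ℝ) (b : ℕ → ℝ) (_ : ∀ i, Set.Ioo (a i) (b i) ⊆ I₀)
    (_ : Pairwise (Function.onFun Disjoint fun i => Set.Ioo (a i) (b i))),
    (jnSum p f a b) ^ (1 / p)

lemma key_est (f : ℝ → ℝ) (hf : Monotone f ∨ Antitone f) (u v : ℝ) (huv : u < v)
    (T : ℝ) (hT : v - u ≤ T) :
    T * |f v - f u| / (v - u + 2 * T) ≤
      ⨍ x in Set.Ioo (u - T) (v + T), |f x - ⨍ y in Set.Ioo (u - T) (v + T), f y| := by
  have hT0 : 0 < T := lt_of_lt_of_le (by linarith) hT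
  set a := u - T with ha_def
  set b := v + T with hb_def
  have hab : a < b := by rw [ha_def, hb_def]; linarith
  set m := ⨍ y in Set.Ioo a b, f y with hm
  -- integrability
  have hii : IntervalIntegrable f volume a b := by
    rcases hf with h | h
    · exact h.intervalIntegrable
    · exact h.intervalIntegrable
  have hint : IntegrableOn f (Set.Ioo a b) :=
    ((intervalIntegrable_iff_integrableOn_Ioc_of_le hab.le).1 hii).mono_set
      Set.Ioo_subset_Ioc_self
  have hintL : IntegrableOn f (Set.Ioo a u) :=
    hint.mono_set (Set.Ioo_subset_Ioo le_rfl (by rw [hb_def]; linarith))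
  have hintR : IntegrableOn f (Set.Ioo v b) :=
    hint.mono_set (Set.Ioo_subset_Ioo (by rw [ha_def]; linarith) le_rfl)
  have hconst : ∀ s t c : ℝ, IntegrableOn (fun _ : ℝ => c) (Set.Ioo s t) := fun s t c =>
    integrableOn_const measure_Ioo_lt_top.ne
  have hmesL : volume (Set.Ioo a u) = ENNReal.ofReal T := by
    rw [Real.volume_Ioo, ha_def]; ring_nf
  have hmesR : volume (Set.Ioo v b) = ENNReal.ofReal T := by
    rw [Real.volume_Ioo, hb_def]; ring_nf
  set A := ∫ x in Set.Ioo a u, (f x - m) with hA_def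
  set B := ∫ x in Set.Ioo v b, (f x - m) with hB_def
  have hA : A = (∫ x in Set.Ioo a u, f x) - T * m := by
    rw [hA_def, integral_sub hintL (hconst a u m), setIntegral_const, Measure.real, hmesL,
      ENNReal.toReal_ofReal hT0.le, smul_eq_mul]
  have hB : B = (∫ x in Set.Ioo v b, f x) - T * m := by
    rw [hB_def, integral_sub hintR (hconst v b m), setIntegral_const, Measure.real, hmesR,
      ENNReal.toReal_ofReal hT0.le, smul_eq_mul]
  have hBA : B - A = (∫ x in Set.Ioo v b, f x) - ∫ x in Set.Ioo a u, f x := by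
    rw [hA, hB]; ring
  have hLB : T * |f v - f u| ≤ |B - A| := by
    rw [hBA]
    rcases hf with h | h
    · have h1 : T * f v ≤ ∫ x in Set.Ioo v b, f x := by
        have h2 := setIntegral_mono_on (hconst v b (f v)) hintR measurableSet_Ioo
          (fun x hx => h hx.1.le)
        rwa [setIntegral_const, Measure.real, hmesR, ENNReal.toReal_ofReal hT0.le, smul_eq_mul] at h2
      have h2 : (∫ x in Set.Ioo a u, f x) ≤ T * f u := by
        have h3 := setIntegral_mono_on hintL (hconst a u (f u)) measurableSet_Ioo
          (fun x hx => h hx.2.le)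
        rwa [setIntegral_const, Measure.real, hmesL, ENNReal.toReal_ofReal hT0.le, smul_eq_mul] at h3
      have hfu : f u ≤ f v := h huv.le
      rw [abs_of_nonneg (by linarith : (0:ℝ) ≤ f v - f u)]
      refine le_trans ?_ (le_abs_self _)
      nlinarith
    · have h1 : (∫ x in Set.Ioo v b, f x) ≤ T * f v := by
        have h2 := setIntegral_mono_on hintR (hconst v b (f v)) measurableSet_Ioo
          (fun x hx => h hx.1.le)
        rwa [setIntegral_const, Measure.real, hmesR, ENNReal.toReal_ofReal hT0.le, smul_eq_mul] at h2
      have h2 : T * f u ≤ ∫ x in Set.Ioo a u, f x := by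
        have h3 := setIntegral_mono_on (hconst a u (f u)) hintL measurableSet_Ioo
          (fun x hx => h hx.2.le)
        rwa [setIntegral_const, Measure.real, hmesL, ENNReal.toReal_ofReal hT0.le, smul_eq_mul] at h3
      have hfu : f v ≤ f u := h huv.le
      rw [abs_of_nonpos (by linarith : f v - f u ≤ 0)]
      refine le_trans ?_ (neg_le_abs _)
      nlinarith
  have hAbsA : |A| ≤ ∫ x in Set.Ioo a u, |f x - m| := by
    simpa [Real.norm_eq_abs] using
      norm_integral_le_integral_norm (μ := volume.restrict (Set.Ioo a u)) (fun x => f x - m)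
  have hAbsB : |B| ≤ ∫ x in Set.Ioo v b, |f x - m| := by
    simpa [Real.norm_eq_abs] using
      norm_integral_le_integral_norm (μ := volume.restrict (Set.Ioo v b)) (fun x => f x - m)
  have hdisj : Disjoint (Set.Ioo a u) (Set.Ioo v b) := by
    apply Set.disjoint_left.2
    intro x hx hx'
    exact absurd (hx.2.trans (huv.trans hx'.1)) (lt_irrefl x)
  have hintabs : IntegrableOn (fun x => |f x - m|) (Set.Ioo a b) :=
    (hint.sub (hconst a b m)).abs
  have hunion : (∫ x in Set.Ioo a u, |f x - m|) + (∫ x in Set.Ioo v b, |f x - m|)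
      ≤ ∫ x in Set.Ioo a b, |f x - m| := by
    have hIL : IntegrableOn (fun x => |f x - m|) (Set.Ioo a u) :=
      (hintL.sub (hconst a u m)).abs
    have hIR : IntegrableOn (fun x => |f x - m|) (Set.Ioo v b) :=
      (hintR.sub (hconst v b m)).abs
    rw [← setIntegral_union hdisj measurableSet_Ioo hIL hIR]
    refine setIntegral_mono_set hintabs
      (Filter.Eventually.of_forall fun x => abs_nonneg _)
      (HasSubset.Subset.eventuallyLE ?_)
    intro x hx
    rcases hx with h | h
    · exact ⟨h.1, by have := h.2; rw [hb_def]; linarith⟩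
    · exact ⟨by have := h.1; rw [ha_def]; linarith, h.2⟩
  have habs : |B - A| ≤ |B| + |A| := abs_sub B A
  have hsum : T * |f v - f u| ≤ ∫ x in Set.Ioo a b, |f x - m| := by linarith
  have hpos : (0:ℝ) < v - u + 2 * T := by linarith
  have hvol : volume (Set.Ioo a b) = ENNReal.ofReal (v - u + 2 * T) := by
    rw [Real.volume_Ioo, ha_def, hb_def]; ring_nf
  rw [setAverage_eq, Measure.real, hvol, ENNReal.toReal_ofReal hpos.le, smul_eq_mul]
  rw [div_eq_inv_mul]
  exact mul_le_mul_of_nonneg_left hsum (by positivity)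

/-- A monotone function on `ℝ` which is not a.e. constant has infinite `JN_p` norm:
for every `K` there is a bounded interval `I = (a,b)` with
`|I| (⨍_I |f − ⟨f⟩_I|)^p > K`. -/
theorem monotone_not_ae_const_JNp_eq_top (p : ℝ) (hp : 1 < p) (f : ℝ → ℝ)
    (hf : Monotone f ∨ Antitone f)
    (hnc : ¬ ∃ c : ℝ, f =ᵐ[volume] fun _ => c) :
    eJN p Set.univ f = ⊤ ∧
      ∀ K : ℝ, ∃ a b : ℝ, a < b ∧
        K < (b - a) * (⨍ x in Set.Ioo a b, |f x - ⨍ y in Set.Ioo a b, f y|) ^ p := by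
  have hne : ∃ u v : ℝ, u < v ∧ f u ≠ f v := by
    by_contra h
    push_neg at h
    apply hnc
    refine ⟨f 0, Filter.Eventually.of_forall fun x => ?_⟩
    show f x = f 0
    rcases lt_trichotomy x 0 with hx | hx | hx
    · exact h x 0 hx
    · rw [hx]
    · exact (h 0 x hx).symm
  obtain ⟨u, v, huv, hne⟩ := hne
  set δ := |f v - f u| with hδ
  have hδ0 : 0 < δ := abs_pos.2 (sub_ne_zero.2 (Ne.symm hne))
  have hc0 : 0 < (δ / 3) ^ p := Real.rpow_pos_of_pos (by linarith) p
  have main : ∀ K : ℝ, ∃ a b : ℝ, a < b ∧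
      K < (b - a) * (⨍ x in Set.Ioo a b, |f x - ⨍ y in Set.Ioo a b, f y|) ^ p := by
    intro K
    set T := max (v - u) (K / (2 * ((δ / 3) ^ p))) + 1 with hT_def
    have hT1 : v - u ≤ T := le_trans (le_max_left _ _) (by rw [hT_def]; linarith)
    have hT0 : 0 < T := lt_of_lt_of_le (by linarith) hT1
    have hT2 : K / (2 * ((δ / 3) ^ p)) < T :=
      lt_of_le_of_lt (le_max_right _ _) (by rw [hT_def]; linarith)
    refine ⟨u - T, v + T, by linarith, ?_⟩
    have hkey := key_est f hf u v huv T hT1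
    have hden : (0:ℝ) < v - u + 2 * T := by linarith
    have havg : δ / 3 ≤
        ⨍ x in Set.Ioo (u - T) (v + T), |f x - ⨍ y in Set.Ioo (u - T) (v + T), f y| := by
      refine le_trans ?_ hkey
      rw [div_le_div_iff₀ (by norm_num) hden]
      nlinarith [hδ0.le]
    have hpow : (δ / 3) ^ p ≤
        (⨍ x in Set.Ioo (u - T) (v + T), |f x - ⨍ y in Set.Ioo (u - T) (v + T), f y|) ^ p :=
      Real.rpow_le_rpow (by linarith) havg (by linarith)
    have hK2 : K < 2 * T * ((δ / 3) ^ p) := by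
      rw [div_lt_iff₀ (by positivity)] at hT2; linarith
    calc K < 2 * T * ((δ / 3) ^ p) := hK2
      _ ≤ (v + T - (u - T)) * ((δ / 3) ^ p) := by nlinarith
      _ ≤ _ := mul_le_mul_of_nonneg_left hpow (by linarith)
  refine ⟨?_, main⟩
  apply ENNReal.eq_top_of_forall_nnreal_le
  intro r
  obtain ⟨a, b, hab, hK⟩ := main ((r : ℝ) ^ p)
  set A : ℕ → ℝ := fun i => if i = 0 then a else 1 with hA_def
  set B : ℕ → ℝ := fun i => if i = 0 then b else 0 with hB_def
  have hsub : ∀ i, Set.Ioo (A i) (B i) ⊆ Set.univ := fun i => Set.subset_univ _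
  have hempty : ∀ k : ℕ, k ≠ 0 → Set.Ioo (A k) (B k) = ∅ := by
    intro k hk
    rw [hA_def, hB_def]
    simp only [if_neg hk]
    exact Set.Ioo_eq_empty (by norm_num)
  have hdisj : Pairwise (Function.onFun Disjoint fun i => Set.Ioo (A i) (B i)) := by
    intro i j hij
    show Disjoint (Set.Ioo (A i) (B i)) (Set.Ioo (A j) (B j))
    rcases eq_or_ne i 0 with hi | hi
    · have hj : j ≠ 0 := fun h => hij (hi.trans h.symm)
      rw [hempty j hj]
      exact Set.disjoint_empty _
    · rw [hempty i hi]
      exact Set.empty_disjoint _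
  refine le_trans ?_
    (le_iSup_of_le A (le_iSup_of_le B (le_iSup_of_le hsub (le_iSup_of_le hdisj le_rfl))))
  have hA0 : A 0 = a := if_pos rfl
  have hB0 : B 0 = b := if_pos rfl
  have hterm : ENNReal.ofReal ((r : ℝ) ^ p) ≤ jnSum p f A B := by
    unfold jnSum
    refine le_trans ?_ (ENNReal.le_tsum 0)
    rw [hA0, hB0, Real.volume_Ioo, ← ENNReal.ofReal_mul (by linarith)]
    exact ENNReal.ofReal_le_ofReal hK.le
  have hp0 : (0:ℝ) < p := by linarith
  have hr : (ENNReal.ofReal ((r : ℝ) ^ p)) ^ (1 / p) = (r : ℝ≥0∞) := by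
    have h1 : ((r : ℝ) ^ p) ^ (1 / p) = (r : ℝ) := by
      rw [← Real.rpow_mul r.coe_nonneg, mul_one_div_cancel (ne_of_gt hp0), Real.rpow_one]
    rw [ENNReal.ofReal_rpow_of_nonneg (Real.rpow_nonneg r.coe_nonneg p) (by positivity),
      h1, ENNReal.ofReal_coe_nnreal]
  calc (r : ℝ≥0∞) = (ENNReal.ofReal ((r : ℝ) ^ p)) ^ (1 / p) := hr.symm
    _ ≤ (jnSum p f A B) ^ (1 / p) := ENNReal.rpow_le_rpow hterm (by positivity)
end

section
/- Let p ∈ (1,∞) and define f : (0,1) → ℝ by f(x) = 2^{k/p} for 2^{-k} ≤ x < 2^{-k+1}, k = 1, 2, 3, .... Then ∫₀¹ |f|^p dx = ∞, yet there exists a constant c_p < ∞ such that for every countable collection (I_i) of pairwise disjoint dyadic subintervals of [0,1], Σ_i |I_i| (⨍_{I_i} |f − ⟨f⟩_{I_i}|)^p ≤ c_p. -/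
open MeasureTheory ENNReal

/-- The dyadic subinterval `[j/2^i, (j+1)/2^i)` of `[0,1]`. -/
noncomputable def dyI (i j : ℕ) : Set ℝ := Set.Ico ((j : ℝ) / 2 ^ i) ((j + 1 : ℝ) / 2 ^ i)


private lemma part1 (p : ℝ) (hp : 1 < p) (f : ℝ → ℝ)
    (hf : ∀ k : ℕ, 1 ≤ k → ∀ x : ℝ, (2 : ℝ) ^ (-(k : ℝ)) ≤ x → x < (2 : ℝ) ^ (-(k : ℝ) + 1) →
      f x = (2 : ℝ) ^ ((k : ℝ) / p)) :
    ∫⁻ x in Set.Ioo (0 : ℝ) 1, ENNReal.ofReal (|f x| ^ p) = ⊤ := by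
  have hp0 : (0:ℝ) < p := lt_trans one_pos hp
  set A : ℕ → Set ℝ := fun k => Set.Ico ((2:ℝ) ^ (-((k:ℝ)+1))) ((2:ℝ) ^ (-((k:ℝ)+1) + 1)) with hA
  have hsub : (⋃ k, A k) ⊆ Set.Ioo (0:ℝ) 1 := by
    rintro x hx
    obtain ⟨k, hk⟩ := Set.mem_iUnion.1 hx
    obtain ⟨h1, h2⟩ := hk
    constructor
    · exact lt_of_lt_of_le (Real.rpow_pos_of_pos two_pos _) h1
    · refine lt_of_lt_of_le h2 ?_
      have : (-((k:ℝ)+1) + 1) ≤ 0 := by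
        have : (0:ℝ) ≤ k := Nat.cast_nonneg k
        linarith
      calc (2:ℝ) ^ (-((k:ℝ)+1) + 1) ≤ (2:ℝ) ^ (0:ℝ) :=
            Real.rpow_le_rpow_of_exponent_le one_le_two this
        _ = 1 := Real.rpow_zero 2
  have hmeas : ∀ k, MeasurableSet (A k) := fun k => measurableSet_Ico
  have hdisj : Pairwise (Function.onFun Disjoint A) := by
    have key : ∀ k l : ℕ, k < l → Disjoint (A k) (A l) := by
      intro k l hkl
      rw [hA, Set.Ico_disjoint_Ico]
      refine le_trans (min_le_right _ _) (le_trans ?_ (le_max_left _ _))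
      apply Real.rpow_le_rpow_of_exponent_le one_le_two
      have : (k:ℝ) + 1 ≤ l := by exact_mod_cast hkl
      linarith
    intro k l hkl
    rcases lt_or_gt_of_ne hkl with h | h
    · exact key k l h
    · exact (key l k h).symm
  have hval : ∀ k : ℕ, ∫⁻ x in A k, ENNReal.ofReal (|f x| ^ p) = 1 := by
    intro k
    have hcongr : ∀ x ∈ A k, ENNReal.ofReal (|f x| ^ p) = ENNReal.ofReal ((2:ℝ) ^ ((k:ℝ)+1)) := by
      intro x hx
      have hfx : f x = (2:ℝ) ^ (((k+1:ℕ):ℝ) / p) := by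
        refine hf (k+1) (Nat.le_add_left 1 k) x ?_ ?_
        · push_cast; exact hx.1
        · push_cast; exact hx.2
      have hpos : 0 < f x := by rw [hfx]; exact Real.rpow_pos_of_pos two_pos _
      push_cast at hfx
      rw [abs_of_pos hpos, hfx, ← Real.rpow_mul (by norm_num : (0:ℝ) ≤ 2),
        div_mul_cancel₀ _ (ne_of_gt hp0)]
    rw [setLIntegral_congr_fun measurableSet_Ico hcongr, setLIntegral_const]
    have hvol : volume (A k) = ENNReal.ofReal ((2:ℝ) ^ (-((k:ℝ)+1))) := by
      rw [hA]
      simp only [Real.volume_Ico]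
      congr 1
      rw [Real.rpow_add_one (two_ne_zero)]
      ring
    rw [hvol, ← ENNReal.ofReal_mul (Real.rpow_nonneg (by norm_num) _),
      ← Real.rpow_add two_pos, show (k:ℝ)+1+(-((k:ℝ)+1)) = 0 by ring, Real.rpow_zero,
      ENNReal.ofReal_one]
  have := lintegral_iUnion (μ := volume) hmeas hdisj (fun x => ENNReal.ofReal (|f x| ^ p))
  rw [eq_top_iff]
  calc (⊤:ℝ≥0∞) = ∑' k : ℕ, (1:ℝ≥0∞) := (ENNReal.tsum_const_eq_top_of_ne_zero one_ne_zero).symm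
    _ = ∑' k : ℕ, ∫⁻ x in A k, ENNReal.ofReal (|f x| ^ p) := by
        exact tsum_congr fun k => (hval k).symm
    _ = ∫⁻ x in ⋃ k, A k, ENNReal.ofReal (|f x| ^ p) := this.symm
    _ ≤ ∫⁻ x in Set.Ioo (0:ℝ) 1, ENNReal.ofReal (|f x| ^ p) := lintegral_mono_set hsub

noncomputable def Gf (p : ℝ) : ℝ → ℝ := fun x => (2:ℝ) ^ (((⌈-Real.logb 2 x⌉ : ℤ) : ℝ) / p)

lemma measurable_Gf (p : ℝ) : Measurable (Gf p) := by
  have h : Gf p = fun x => Real.exp (Real.log 2 * (((⌈-Real.logb 2 x⌉ : ℤ) : ℝ) / p)) :=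
    funext fun x => Real.rpow_def_of_pos two_pos _
  rw [h]
  have hlogb : Measurable fun x : ℝ => -Real.logb 2 x := by
    simp only [Real.logb]; exact (Real.measurable_log.div_const _).neg
  exact Real.measurable_exp.comp ((((measurable_from_top (f := fun n : ℤ => (n:ℝ))).comp
    hlogb.ceil).div_const p).const_mul _)

lemma f_eq_Gf (p : ℝ) (hp : 1 < p) (f : ℝ → ℝ)
    (hf : ∀ k : ℕ, 1 ≤ k → ∀ x : ℝ, (2 : ℝ) ^ (-(k : ℝ)) ≤ x → x < (2 : ℝ) ^ (-(k : ℝ) + 1) →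
      f x = (2 : ℝ) ^ ((k : ℝ) / p)) :
    ∀ x ∈ Set.Ioo (0:ℝ) 1, f x = Gf p x := by
  intro x hx
  have hlog : Real.logb 2 x < 0 := Real.logb_neg one_lt_two hx.1 hx.2
  set y : ℝ := -Real.logb 2 x with hy
  have hy0 : 0 < y := by simp only [hy]; linarith
  have hc1 : 0 < ⌈y⌉ := Int.ceil_pos.2 hy0
  set k : ℕ := ⌈y⌉.toNat with hk
  have hk1 : 1 ≤ k := by omega
  have hkr : ((k:ℕ):ℝ) = ((⌈y⌉ : ℤ) : ℝ) := by
    rw [hk]; exact_mod_cast congrArg (fun n : ℤ => (n:ℝ)) (Int.toNat_of_nonneg hc1.le)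
  have hlb : (2:ℝ) ^ (-(k:ℝ)) ≤ x := by
    have h1 : y ≤ (k:ℝ) := by rw [hkr]; exact Int.le_ceil y
    calc (2:ℝ) ^ (-(k:ℝ)) ≤ 2 ^ Real.logb 2 x :=
          Real.rpow_le_rpow_of_exponent_le one_le_two (by rw [hy] at h1; linarith)
      _ = x := Real.rpow_logb two_pos (by norm_num) hx.1
  have hub : x < (2:ℝ) ^ (-(k:ℝ) + 1) := by
    have h2 : (k:ℝ) < y + 1 := by rw [hkr]; exact Int.ceil_lt_add_one y
    calc x = 2 ^ Real.logb 2 x := (Real.rpow_logb two_pos (by norm_num) hx.1).symm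
      _ < (2:ℝ) ^ (-(k:ℝ) + 1) :=
          Real.rpow_lt_rpow_of_exponent_lt one_lt_two (by rw [hy] at h2; linarith)
  rw [hf k hk1 x hlb hub, Gf, hkr]

lemma f_bound (p : ℝ) (hp : 1 < p) (f : ℝ → ℝ)
    (hf : ∀ k : ℕ, 1 ≤ k → ∀ x : ℝ, (2 : ℝ) ^ (-(k : ℝ)) ≤ x → x < (2 : ℝ) ^ (-(k : ℝ) + 1) →
      f x = (2 : ℝ) ^ ((k : ℝ) / p)) :
    ∀ x ∈ Set.Ioo (0:ℝ) 1, 0 < f x ∧ f x ≤ (2:ℝ) ^ (1/p) * x ^ (-(1/p)) := by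
  intro x hx
  have hp0 : (0:ℝ) < p := lt_trans one_pos hp
  rw [f_eq_Gf p hp f hf x hx]
  refine ⟨Real.rpow_pos_of_pos two_pos _, ?_⟩
  set y : ℝ := -Real.logb 2 x with hy
  have h2 : ((⌈y⌉ : ℤ) : ℝ) / p ≤ (y + 1) / p := by
    have := (Int.ceil_lt_add_one y).le
    gcongr
  calc Gf p x ≤ (2:ℝ) ^ ((y+1)/p) := Real.rpow_le_rpow_of_exponent_le one_le_two h2
    _ = (2:ℝ) ^ (1/p) * (2:ℝ) ^ (y * (1/p)) := by
        rw [← Real.rpow_add two_pos]; congr 1; field_simp; ring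
    _ = (2:ℝ) ^ (1/p) * x ^ (-(1/p)) := by
        congr 1
        rw [Real.rpow_mul (by norm_num) y (1/p), hy, Real.rpow_neg (by norm_num),
          Real.rpow_logb two_pos (by norm_num) hx.1, Real.rpow_neg hx.1.le,
          Real.inv_rpow hx.1.le]

lemma f_int_bound (p : ℝ) (hp : 1 < p) (f : ℝ → ℝ)
    (hf : ∀ k : ℕ, 1 ≤ k → ∀ x : ℝ, (2 : ℝ) ^ (-(k : ℝ)) ≤ x → x < (2 : ℝ) ^ (-(k : ℝ) + 1) →
      f x = (2 : ℝ) ^ ((k : ℝ) / p)) (t : ℝ) (ht0 : 0 < t) (ht1 : t ≤ 1) :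
    IntegrableOn f (Set.Ico 0 t) ∧
    ∫ x in Set.Ico (0:ℝ) t, |f x| ≤ (2:ℝ) ^ (1/p) / (1 - 1/p) * t ^ (1 - 1/p) := by
  have hp0 : (0:ℝ) < p := lt_trans one_pos hp
  have hq : (0:ℝ) < 1 - 1/p := by
    have : 1/p < 1 := by rw [div_lt_one hp0]; exact hp
    linarith
  have hr : (-1:ℝ) < -(1/p) := by linarith
  have hIsub : Set.Ioo (0:ℝ) t ⊆ Set.Ioo 0 1 := Set.Ioo_subset_Ioo le_rfl ht1
  have hdom : IntegrableOn (fun x => (2:ℝ)^(1/p) * x ^ (-(1/p))) (Set.Ioo 0 t) := by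
    have h1 : IntervalIntegrable (fun x : ℝ => x ^ (-(1/p))) volume 0 t :=
      intervalIntegral.intervalIntegrable_rpow' hr
    have h2 : IntegrableOn (fun x : ℝ => x ^ (-(1/p))) (Set.Ioc 0 t) :=
      (intervalIntegrable_iff_integrableOn_Ioc_of_le ht0.le).1 h1
    exact (h2.mono_set Set.Ioo_subset_Ioc_self).const_mul _
  have hfmeas : AEStronglyMeasurable f (volume.restrict (Set.Ioo 0 t)) := by
    refine ((measurable_Gf p).aestronglyMeasurable).congr ?_
    filter_upwards [ae_restrict_mem measurableSet_Ioo] with x hx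
    exact (f_eq_Gf p hp f hf x (hIsub hx)).symm
  have hIoo : IntegrableOn f (Set.Ioo 0 t) := by
    refine Integrable.mono' hdom hfmeas ?_
    filter_upwards [ae_restrict_mem measurableSet_Ioo] with x hx
    obtain ⟨h1, h2⟩ := f_bound p hp f hf x (hIsub hx)
    rw [Real.norm_eq_abs, abs_of_pos h1]; exact h2
  refine ⟨(integrableOn_Ico_iff_integrableOn_Ioo (by simp)).2 hIoo, ?_⟩
  have heq : ∫ x in Set.Ico (0:ℝ) t, |f x| = ∫ x in Set.Ioo (0:ℝ) t, |f x| :=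
    (setIntegral_congr_set Ioo_ae_eq_Ico).symm
  rw [heq]
  have hmono : ∫ x in Set.Ioo (0:ℝ) t, |f x| ≤
      ∫ x in Set.Ioo (0:ℝ) t, (2:ℝ)^(1/p) * x ^ (-(1/p)) := by
    refine setIntegral_mono_on hIoo.abs hdom measurableSet_Ioo ?_
    intro x hx
    obtain ⟨h1, h2⟩ := f_bound p hp f hf x (hIsub hx)
    rw [abs_of_pos h1]; exact h2
  refine le_trans hmono (le_of_eq ?_)
  rw [integral_const_mul]
  have h3 : ∫ x in Set.Ioo (0:ℝ) t, x ^ (-(1/p)) = ∫ x in (0:ℝ)..t, x ^ (-(1/p)) := by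
    rw [intervalIntegral.integral_of_le ht0.le]
    exact setIntegral_congr_set Ioo_ae_eq_Ioc
  rw [h3, integral_rpow (Or.inl hr), Real.zero_rpow (by linarith : -(1/p) + 1 ≠ 0)]
  rw [show -(1/p) + 1 = 1 - 1/p by ring]
  ring

lemma core_bound (p : ℝ) (hp : 1 < p) (f : ℝ → ℝ)
    (hf : ∀ k : ℕ, 1 ≤ k → ∀ x : ℝ, (2 : ℝ) ^ (-(k : ℝ)) ≤ x → x < (2 : ℝ) ^ (-(k : ℝ) + 1) →
      f x = (2 : ℝ) ^ ((k : ℝ) / p)) (t : ℝ) (ht0 : 0 < t) (ht1 : t ≤ 1) :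
    ENNReal.ofReal t *
      ENNReal.ofReal ((⨍ x in Set.Ico (0:ℝ) t, |f x - ⨍ y in Set.Ico (0:ℝ) t, f y|) ^ p)
    ≤ ENNReal.ofReal ((2 * ((2:ℝ) ^ (1/p) / (1 - 1/p))) ^ p) := by
  have hp0 : (0:ℝ) < p := lt_trans one_pos hp
  have hq : (0:ℝ) < 1 - 1/p := by
    have : 1/p < 1 := by rw [div_lt_one hp0]; exact hp
    linarith
  set K : ℝ := (2:ℝ) ^ (1/p) / (1 - 1/p) with hK
  have hK0 : 0 < K := div_pos (Real.rpow_pos_of_pos two_pos _) hq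
  obtain ⟨hInt, hBnd⟩ := f_int_bound p hp f hf t ht0 ht1
  set I := Set.Ico (0:ℝ) t with hI
  have hvolI : volume I = ENNReal.ofReal t := by rw [hI, Real.volume_Ico, sub_zero]
  have htoReal : (volume I).toReal = t := by rw [hvolI, ENNReal.toReal_ofReal ht0.le]
  set m := ⨍ y in I, f y with hm
  have hmval : m = t⁻¹ * ∫ y in I, f y := by
    rw [hm, setAverage_eq, measureReal_def, htoReal, smul_eq_mul]
  have hfabs_nn : 0 ≤ ∫ y in I, |f y| := integral_nonneg fun y => abs_nonneg _
  have habs : |m| ≤ t⁻¹ * ∫ y in I, |f y| := by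
    rw [hmval, abs_mul, abs_of_nonneg (inv_nonneg.2 ht0.le)]
    refine mul_le_mul_of_nonneg_left ?_ (inv_nonneg.2 ht0.le)
    have h := norm_integral_le_integral_norm (μ := volume.restrict I) f
    simpa [Real.norm_eq_abs] using h
  have hconst : IntegrableOn (fun _ => m) I :=
    integrableOn_const (by rw [hvolI]; exact ENNReal.ofReal_ne_top)
  have hconstabs : IntegrableOn (fun _ => |m|) I :=
    integrableOn_const (by rw [hvolI]; exact ENNReal.ofReal_ne_top)
  have hsub : IntegrableOn (fun x => |f x - m|) I := (hInt.sub hconst).abs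
  have hintle : ∫ x in I, |f x - m| ≤ (∫ x in I, |f x|) + t * |m| := by
    have h1 : ∫ x in I, |f x - m| ≤ ∫ x in I, (|f x| + |m|) := by
      refine integral_mono hsub (hInt.abs.add hconstabs) fun x => ?_
      calc |f x - m| = ‖f x - m‖ := (Real.norm_eq_abs _).symm
        _ ≤ ‖f x‖ + ‖m‖ := norm_sub_le _ _
        _ = |f x| + |m| := by rw [Real.norm_eq_abs, Real.norm_eq_abs]
    have h2 : ∫ x in I, (|f x| + |m|) = (∫ x in I, |f x|) + t * |m| := by
      rw [integral_add hInt.abs hconstabs, setIntegral_const, smul_eq_mul, measureReal_def, htoReal]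
    linarith
  have hintle2 : ∫ x in I, |f x - m| ≤ 2 * ∫ x in I, |f x| := by
    have : t * |m| ≤ ∫ x in I, |f x| := by
      calc t * |m| ≤ t * (t⁻¹ * ∫ y in I, |f y|) :=
            mul_le_mul_of_nonneg_left habs ht0.le
        _ = ∫ y in I, |f y| := by field_simp
    linarith
  set A := ⨍ x in I, |f x - m| with hA
  have hAval : A = t⁻¹ * ∫ x in I, |f x - m| := by
    rw [hA, setAverage_eq, measureReal_def, htoReal, smul_eq_mul]
  have hAnn : 0 ≤ A := by
    rw [hAval]
    exact mul_nonneg (inv_nonneg.2 ht0.le) (integral_nonneg fun x => abs_nonneg _)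
  have hAle : A ≤ 2 * K * t ^ (-(1/p)) := by
    rw [hAval]
    calc t⁻¹ * ∫ x in I, |f x - m| ≤ t⁻¹ * (2 * ∫ x in I, |f x|) :=
          mul_le_mul_of_nonneg_left hintle2 (inv_nonneg.2 ht0.le)
      _ ≤ t⁻¹ * (2 * (K * t ^ (1 - 1/p))) := by
          refine mul_le_mul_of_nonneg_left ?_ (inv_nonneg.2 ht0.le)
          refine mul_le_mul_of_nonneg_left ?_ (by norm_num)
          rw [hK]; exact hBnd
      _ = 2 * K * (t⁻¹ * t ^ (1 - 1/p)) := by ring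
      _ = 2 * K * t ^ (-(1/p)) := by
          congr 1
          rw [← Real.rpow_neg_one t, ← Real.rpow_add ht0]
          congr 1; ring
  have hApow : A ^ p ≤ (2*K) ^ p * t ^ (-1 : ℝ) := by
    calc A ^ p ≤ (2 * K * t ^ (-(1/p))) ^ p := Real.rpow_le_rpow hAnn hAle hp0.le
      _ = (2*K) ^ p * (t ^ (-(1/p))) ^ p := by
          rw [Real.mul_rpow (by positivity) (Real.rpow_nonneg ht0.le _)]
      _ = (2*K) ^ p * t ^ (-1 : ℝ) := by
          rw [← Real.rpow_mul ht0.le]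
          congr 2
          field_simp
  have hfinal : t * A ^ p ≤ (2*K) ^ p := by
    calc t * A ^ p ≤ t * ((2*K) ^ p * t ^ (-1:ℝ)) :=
          mul_le_mul_of_nonneg_left hApow ht0.le
      _ = (2*K) ^ p := by
          rw [Real.rpow_neg_one t]; field_simp
  rw [← ENNReal.ofReal_mul ht0.le]
  exact ENNReal.ofReal_le_ofReal hfinal


lemma measurableSet_dyI (i j : ℕ) : MeasurableSet (dyI i j) := by
  unfold dyI; exact measurableSet_Ico

lemma volume_dyI (i j : ℕ) : volume (dyI i j) = ENNReal.ofReal (((2:ℝ)^i)⁻¹) := by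
  unfold dyI
  rw [Real.volume_Ico]
  congr 1
  rw [div_sub_div_same]
  ring_nf

lemma term_zero (p : ℝ) (hp : 1 < p) (f : ℝ → ℝ)
    (hf : ∀ k : ℕ, 1 ≤ k → ∀ x : ℝ, (2 : ℝ) ^ (-(k : ℝ)) ≤ x → x < (2 : ℝ) ^ (-(k : ℝ) + 1) →
      f x = (2 : ℝ) ^ ((k : ℝ) / p)) (i j : ℕ) (hj : j ≠ 0) (hji : j < 2^i) :
    volume (dyI i j) * ENNReal.ofReal ((⨍ x in dyI i j, |f x - ⨍ y in dyI i j, f y|) ^ p) = 0 := by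
  have hp0 : (0:ℝ) < p := lt_trans one_pos hp
  set n := Nat.log 2 j with hn
  have h1 : 2^n ≤ j := Nat.pow_log_le_self 2 hj
  have h2 : j < 2^(n+1) := Nat.lt_pow_succ_log_self (by norm_num) j
  have hmi : n < i := by
    have : (2:ℕ)^n < 2^i := lt_of_le_of_lt h1 hji
    exact (Nat.pow_lt_pow_iff_right (by norm_num)).1 this
  set k := i - n with hk
  have hik : i = n + k := by omega
  have hk1 : 1 ≤ k := by omega
  have hconstk : ∀ x ∈ dyI i j, f x = (2:ℝ) ^ ((k:ℝ)/p) := by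
    intro x hx
    obtain ⟨hx1, hx2⟩ := hx
    refine hf k hk1 x ?_ ?_
    · have e1 : (2:ℝ) ^ (-(k:ℝ)) = ((2:ℝ)^(k:ℕ))⁻¹ := by
        rw [Real.rpow_neg (by norm_num), Real.rpow_natCast]
      have e2 : ((2:ℝ)^(k:ℕ))⁻¹ ≤ (j:ℝ)/2^i := by
        rw [hik, pow_add]
        have e3 : ((2:ℝ)^n) / ((2:ℝ)^n * 2^k) = ((2:ℝ)^k)⁻¹ := by
          field_simp
        rw [← e3]
        gcongr
        exact_mod_cast h1
      rw [e1]; exact le_trans e2 hx1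
    · have e1 : (2:ℝ) ^ (-(k:ℝ)+1) = 2 * ((2:ℝ)^(k:ℕ))⁻¹ := by
        rw [Real.rpow_add two_pos, Real.rpow_one, Real.rpow_neg (by norm_num),
          Real.rpow_natCast]
        ring
      have e2 : ((j:ℝ)+1)/2^i ≤ 2 * ((2:ℝ)^(k:ℕ))⁻¹ := by
        rw [hik, pow_add]
        have h2' : ((j:ℝ)+1) ≤ 2 * (2:ℝ)^n := by
          have : (j:ℝ) + 1 ≤ ((2^(n+1) : ℕ) : ℝ) := by exact_mod_cast h2
          rw [pow_succ] at this; push_cast at this; linarith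
        calc ((j:ℝ)+1)/((2:ℝ)^n*2^k) ≤ (2*(2:ℝ)^n)/((2:ℝ)^n*2^k) := by gcongr
          _ = 2 * ((2:ℝ)^k)⁻¹ := by field_simp
      exact lt_of_lt_of_le hx2 (e1 ▸ e2)
  have hvol0 : volume (dyI i j) ≠ 0 := by
    rw [volume_dyI]
    simp only [ne_eq, ENNReal.ofReal_eq_zero, not_le]
    positivity
  have hvoltop : volume (dyI i j) ≠ ⊤ := by
    rw [volume_dyI]; exact ENNReal.ofReal_ne_top
  set C : ℝ := (2:ℝ)^((k:ℝ)/p) with hC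
  have hmean : (⨍ y in dyI i j, f y) = C :=
    calc ⨍ y in dyI i j, f y = ⨍ _y in dyI i j, C :=
          setAverage_congr_fun (measurableSet_dyI i j) (ae_of_all _ hconstk)
      _ = C := setAverage_const hvol0 hvoltop _
  have hosc : (⨍ x in dyI i j, |f x - ⨍ y in dyI i j, f y|) = 0 := by
    rw [hmean]
    calc ⨍ x in dyI i j, |f x - C| = ⨍ _x in dyI i j, (0:ℝ) :=
          setAverage_congr_fun (measurableSet_dyI i j)
            (ae_of_all _ fun x hx => by rw [hconstk x hx, sub_self, abs_zero])
      _ = 0 := by simp [average]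
  rw [hosc, Real.zero_rpow (ne_of_gt hp0), ENNReal.ofReal_zero, mul_zero]


lemma dyI_zero (i : ℕ) : dyI i 0 = Set.Ico (0:ℝ) (((2:ℝ)^i)⁻¹) := by
  unfold dyI
  norm_num

lemma zero_mem_dyI_zero (i : ℕ) : (0:ℝ) ∈ dyI i 0 := by
  rw [dyI_zero]
  exact ⟨le_refl 0, by positivity⟩

/-- The function `f(x) = 2^{k/p}` for `2^{-k} ≤ x < 2^{-k+1}`, `k = 1, 2, …`,
satisfies `∫₀¹ |f|^p = ∞`, but it lies in the dyadic John–Nirenberg space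
`JN_{p,dyadic}([0,1])`: there is `c_p < ∞` bounding
`Σᵢ |Iᵢ| (⨍_{Iᵢ} |f − ⟨f⟩_{Iᵢ}|)^p` over all countable collections of pairwise
disjoint dyadic subintervals of `[0,1]`. -/
theorem dyadic_JNp_not_Lp (p : ℝ) (hp : 1 < p) (f : ℝ → ℝ)
    (hf : ∀ k : ℕ, 1 ≤ k → ∀ x : ℝ, (2 : ℝ) ^ (-(k : ℝ)) ≤ x → x < (2 : ℝ) ^ (-(k : ℝ) + 1) →
      f x = (2 : ℝ) ^ ((k : ℝ) / p)) :
    (∫⁻ x in Set.Ioo (0 : ℝ) 1, ENNReal.ofReal (|f x| ^ p) = ⊤) ∧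
    ∃ c : ℝ, 0 < c ∧ ∀ S : Set (ℕ × ℕ),
      (∀ q ∈ S, q.2 < 2 ^ q.1) →
      (S.Pairwise fun q q' => Disjoint (dyI q.1 q.2) (dyI q'.1 q'.2)) →
      ∑' q : S, volume (dyI q.1.1 q.1.2) *
          ENNReal.ofReal ((⨍ x in dyI q.1.1 q.1.2, |f x - ⨍ y in dyI q.1.1 q.1.2, f y|) ^ p)
        ≤ ENNReal.ofReal c := by
  have hp0 : (0:ℝ) < p := lt_trans one_pos hp
  have hq : (0:ℝ) < 1 - 1/p := by
    have : 1/p < 1 := by rw [div_lt_one hp0]; exact hp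
    linarith
  refine ⟨part1 p hp f hf, (2 * ((2:ℝ) ^ (1/p) / (1 - 1/p))) ^ p, ?_, ?_⟩
  · apply Real.rpow_pos_of_pos
    positivity
  · intro S hS hdisj
    by_cases hex : ∃ q ∈ S, q.2 = 0
    · obtain ⟨q0, hq0S, hq02⟩ := hex
      have huniq : ∀ q ∈ S, q.2 = 0 → q = q0 := by
        intro q hq hq2
        by_contra hne
        have hd := hdisj hq hq0S hne
        have h0 : (0:ℝ) ∈ dyI q.1 q.2 := by rw [hq2]; exact zero_mem_dyI_zero q.1
        have h0' : (0:ℝ) ∈ dyI q0.1 q0.2 := by rw [hq02]; exact zero_mem_dyI_zero q0.1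
        exact Set.disjoint_left.1 hd h0 h0'
      rw [tsum_eq_single (⟨q0, hq0S⟩ : S) ?_]
      · show volume (dyI q0.1 q0.2) *
            ENNReal.ofReal ((⨍ x in dyI q0.1 q0.2, |f x - ⨍ y in dyI q0.1 q0.2, f y|) ^ p)
          ≤ _
        rw [hq02, dyI_zero, Real.volume_Ico, sub_zero]
        refine core_bound p hp f hf _ (by positivity) ?_
        rw [inv_le_one₀ (by positivity)]
        exact one_le_pow₀ one_le_two
      · rintro ⟨q, hq⟩ hne
        by_cases h2 : q.2 = 0
        · exact absurd (Subtype.ext (huniq q hq h2)) hne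
        · exact term_zero p hp f hf q.1 q.2 h2 (hS q hq)
    · push_neg at hex
      have hz : ∀ q : S, volume (dyI (q:ℕ×ℕ).1 (q:ℕ×ℕ).2) *
          ENNReal.ofReal ((⨍ x in dyI (q:ℕ×ℕ).1 (q:ℕ×ℕ).2,
            |f x - ⨍ y in dyI (q:ℕ×ℕ).1 (q:ℕ×ℕ).2, f y|) ^ p) = 0 := by
        rintro ⟨q, hq⟩
        exact term_zero p hp f hf q.1 q.2 (hex q hq) (hS q hq)
      calc ∑' q : S, volume (dyI (q:ℕ×ℕ).1 (q:ℕ×ℕ).2) *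
            ENNReal.ofReal ((⨍ x in dyI (q:ℕ×ℕ).1 (q:ℕ×ℕ).2,
              |f x - ⨍ y in dyI (q:ℕ×ℕ).1 (q:ℕ×ℕ).2, f y|) ^ p)
          = ∑' _q : S, (0:ℝ≥0∞) := tsum_congr hz
        _ = 0 := tsum_zero
        _ ≤ _ := zero_le
end

section
/- Let p ∈ (1,∞) and let f : (0,1) → ℝ be given by f(x) = x^{-1/p}. Then f belongs to the weak Lebesgue space L^{p,∞}((0,1)), i.e. sup_{t>0} t · |{x ∈ (0,1) : f(x) > t}|^{1/p} ≤ 1, but ‖f‖_{JN_p((0,1))} = ∞. In particular the inclusion JN_p((0,1)) ⊂ L^{p,∞}((0,1)) is strict. -/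
open MeasureTheory ENNReal

lemma integral_rpow_Ioo {r : ℝ} (hr : -1 < r) {a b : ℝ} (hab : a ≤ b) :
    ∫ x in Set.Ioo a b, x ^ r = (b ^ (r+1) - a ^ (r+1)) / (r+1) := by
  rw [← integral_Ioc_eq_integral_Ioo, ← intervalIntegral.integral_of_le hab]
  exact integral_rpow (Or.inl hr)

lemma gamma_pos {α : ℝ} (h0 : 0 < α) (h1 : α < 1) :
    0 < 2 * (3/2:ℝ) ^ α - 2 ^ α - 1 := by
  have hc := Real.strictConcaveOn_rpow h0 h1
  have := hc.2 (Set.mem_Ici.mpr (by norm_num : (0:ℝ) ≤ 1))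
    (Set.mem_Ici.mpr (by norm_num : (0:ℝ) ≤ 2)) (by norm_num)
    (by norm_num : (0:ℝ) < 1/2) (by norm_num : (0:ℝ) < 1/2) (by norm_num)
  simp only [smul_eq_mul] at this
  have h32 : (1/2:ℝ) * 1 + (1/2) * 2 = 3/2 := by norm_num
  rw [h32, Real.one_rpow] at this
  linarith

lemma key_lb (p : ℝ) (hp : 1 < p) (s : ℝ) (hs : 0 < s) :
    ENNReal.ofReal (((2*(3/2:ℝ)^(1-1/p) - 2^(1-1/p) - 1)/(2*(1-1/p)))^p) ≤
    volume (Set.Ioo s (2*s)) *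
      ENNReal.ofReal ((⨍ x in Set.Ioo s (2*s), |x ^ (-(1/p)) - ⨍ y in Set.Ioo s (2*s), y ^ (-(1/p))|) ^ p) := by
  have hp0 : 0 < p := lt_trans one_pos hp
  have hp1 : 0 < 1/p := by positivity
  have hp1' : 1/p < 1 := by rw [div_lt_one hp0]; exact hp
  set α : ℝ := 1 - 1/p with hα
  set r : ℝ := -(1/p) with hr
  have hrα : r + 1 = α := by rw [hα, hr]; ring
  have hα0 : 0 < α := by rw [hα]; linarith
  have hα1 : α < 1 := by rw [hα]; linarith
  have hr1 : (-1:ℝ) < r := by rw [hr]; linarith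
  set γ : ℝ := 2*(3/2:ℝ)^α - 2^α - 1 with hγ
  have hγ0 : 0 < γ := gamma_pos hα0 hα1
  set C : ℝ := γ/(2*α) with hC
  have hC0 : 0 < C := by positivity
  have hs2 : s ≤ 2*s := by linarith
  have hsne := hs.ne'
  have hαne := hα0.ne'
  -- volume facts
  have hvolI : volume (Set.Ioo s (2*s)) = ENNReal.ofReal s := by
    rw [Real.volume_Ioo]; congr 1; ring
  have hvolJ : volume (Set.Ioo s (3/2*s)) = ENNReal.ofReal (s/2) := by
    rw [Real.volume_Ioo]; congr 1; ring
  -- integrability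
  have hInt : IntegrableOn (fun x : ℝ => x ^ r) (Set.Ioo s (2*s)) volume := by
    have := (intervalIntegral.intervalIntegrable_rpow' (a := s) (b := 2*s) hr1)
    exact ((intervalIntegrable_iff_integrableOn_Ioc_of_le hs2).mp this).mono_set
      Set.Ioo_subset_Ioc_self
  -- the inner average
  set c : ℝ := ⨍ y in Set.Ioo s (2*s), y ^ r with hc
  have hc_val : c = ((2*s) ^ α - s ^ α)/(α * s) := by
    rw [hc, setAverage_eq, measureReal_def, hvolI, ENNReal.toReal_ofReal hs.le,
      integral_rpow_Ioo hr1 hs2, hrα, smul_eq_mul, inv_mul_eq_div, div_div]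
  have hIntc' : IntegrableOn (fun x : ℝ => x ^ r - c) (Set.Ioo s (2*s)) volume :=
    hInt.sub ((integrableOn_const_iff).mpr (Or.inr (by rw [hvolI]; exact ENNReal.ofReal_lt_top)))
  have hIntc : IntegrableOn (fun x : ℝ => |x ^ r - c|) (Set.Ioo s (2*s)) volume := hIntc'.abs
  have hJI : Set.Ioo s (3/2*s) ⊆ Set.Ioo s (2*s) :=
    Set.Ioo_subset_Ioo le_rfl (by linarith)
  -- chain of integral inequalities
  have step1 : ∫ x in Set.Ioo s (3/2*s), (x ^ r - c) ≤ ∫ x in Set.Ioo s (2*s), |x ^ r - c| := by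
    calc ∫ x in Set.Ioo s (3/2*s), (x ^ r - c)
        ≤ ∫ x in Set.Ioo s (3/2*s), |x ^ r - c| := by
          apply setIntegral_mono_on (hIntc'.mono_set hJI) (hIntc.mono_set hJI) measurableSet_Ioo
          intro x _; exact le_abs_self _
      _ ≤ ∫ x in Set.Ioo s (2*s), |x ^ r - c| := by
          apply setIntegral_mono_set hIntc
          · filter_upwards with x using abs_nonneg _
          · exact hJI.eventuallyLE
  -- compute the left side of step1
  have hJint : ∫ x in Set.Ioo s (3/2*s), (x ^ r - c)
      = ((3/2*s) ^ α - s ^ α)/α - (s/2) * c := by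
    rw [integral_sub ((hInt.mono_set hJI)) ((integrableOn_const_iff).mpr (Or.inr (by
      rw [hvolJ]; exact ENNReal.ofReal_lt_top)))]
    rw [integral_rpow_Ioo hr1 (by linarith : s ≤ 3/2*s), hrα, setIntegral_const, measureReal_def, hvolJ,
      ENNReal.toReal_ofReal (by positivity), smul_eq_mul]
  -- value of the gap
  have hgap : ((3/2*s) ^ α - s ^ α)/α - (s/2) * c = (s/2) * (s ^ r * (2*C)) := by
    rw [hc_val, hC]
    have h32 : (3/2*s) ^ α = (3/2:ℝ) ^ α * s ^ α := Real.mul_rpow (by norm_num) hs.le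
    have h2 : (2*s) ^ α = (2:ℝ) ^ α * s ^ α := Real.mul_rpow (by norm_num) hs.le
    have hsr : s ^ r = s ^ α / s := by
      rw [hr]
      rw [show -(1/p) = α - 1 by rw [hα]; ring, Real.rpow_sub hs, Real.rpow_one]
    rw [h32, h2, hsr, hγ]
    field_simp
    ring
  -- lower bound for the average of |f - c|
  have havg : s ^ r * C ≤ ⨍ x in Set.Ioo s (2*s), |x ^ r - c| := by
    rw [setAverage_eq, measureReal_def, hvolI, ENNReal.toReal_ofReal hs.le, smul_eq_mul]
    have h1 : (s/2) * (s ^ r * (2*C)) ≤ ∫ x in Set.Ioo s (2*s), |x ^ r - c| := by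
      rw [← hgap, ← hJint]; exact step1
    rw [inv_mul_eq_div, le_div_iff₀ hs]
    calc s ^ r * C * s = (s/2) * (s ^ r * (2*C)) := by ring
      _ ≤ _ := h1
  -- conclude
  have havg0 : 0 < s ^ r * C := by positivity
  have hpow : (s ^ r * C) ^ p ≤ (⨍ x in Set.Ioo s (2*s), |x ^ r - c|) ^ p :=
    Real.rpow_le_rpow havg0.le havg hp0.le
  have hsrp : (s ^ r * C) ^ p = s⁻¹ * C ^ p := by
    rw [Real.mul_rpow (Real.rpow_nonneg hs.le _) hC0.le]
    congr 1
    rw [← Real.rpow_mul hs.le, hr, show -(1/p) * p = -1 by field_simp, Real.rpow_neg_one]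
  calc ENNReal.ofReal (C ^ p) = ENNReal.ofReal s * ENNReal.ofReal (s⁻¹ * C ^ p) := by
        rw [← ENNReal.ofReal_mul hs.le]
        congr 1
        field_simp
    _ ≤ volume (Set.Ioo s (2*s)) *
        ENNReal.ofReal ((⨍ x in Set.Ioo s (2*s), |x ^ r - c|) ^ p) := by
        rw [hvolI]
        gcongr
        rw [← hsrp]
        exact hpow

/-- The function `f(x) = x^{-1/p}` lies in weak `L^p((0,1))` with quasinorm at most `1`,
but `‖f‖_{JN_p((0,1))} = ∞`; hence `JN_p((0,1)) ⊊ L^{p,∞}((0,1))`. -/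
theorem rpow_weakLp_not_JNp (p : ℝ) (hp : 1 < p) :
    (∀ t : ℝ, 0 < t →
      ENNReal.ofReal t *
          volume {x ∈ Set.Ioo (0 : ℝ) 1 | t < x ^ (-(1 / p))} ^ (1 / p) ≤ 1) ∧
    eJN p (Set.Ioo 0 1) (fun x : ℝ => x ^ (-(1 / p))) = ⊤ := by
  constructor
  · intro t ht
    have hp0 : 0 < p := lt_trans one_pos hp
    have hsub : {x ∈ Set.Ioo (0 : ℝ) 1 | t < x ^ (-(1 / p))} ⊆ Set.Ioo 0 (t ^ (-p)) := by
      rintro x ⟨⟨hx0, _⟩, hxt⟩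
      refine ⟨hx0, ?_⟩
      have h1 : t ^ p < (x ^ (-(1/p))) ^ p := Real.rpow_lt_rpow ht.le hxt hp0
      rw [← Real.rpow_mul hx0.le] at h1
      have : -(1/p) * p = -1 := by field_simp
      rw [this, Real.rpow_neg_one] at h1
      rw [Real.rpow_neg ht.le]
      calc x = (x⁻¹)⁻¹ := (inv_inv x).symm
        _ < (t ^ p)⁻¹ := by
          apply inv_strictAnti₀ (Real.rpow_pos_of_pos ht p) h1
    have hvol : volume {x ∈ Set.Ioo (0 : ℝ) 1 | t < x ^ (-(1 / p))} ≤ ENNReal.ofReal (t ^ (-p)) := by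
      calc volume _ ≤ volume (Set.Ioo 0 (t ^ (-p))) := measure_mono hsub
        _ = ENNReal.ofReal (t ^ (-p) - 0) := Real.volume_Ioo
        _ = ENNReal.ofReal (t ^ (-p)) := by rw [sub_zero]
    calc ENNReal.ofReal t * volume {x ∈ Set.Ioo (0 : ℝ) 1 | t < x ^ (-(1 / p))} ^ (1 / p)
        ≤ ENNReal.ofReal t * (ENNReal.ofReal (t ^ (-p))) ^ (1/p) := by
          gcongr
      _ = ENNReal.ofReal t * ENNReal.ofReal ((t ^ (-p)) ^ (1/p)) := by
          rw [ENNReal.ofReal_rpow_of_pos (Real.rpow_pos_of_pos ht _)]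
      _ = ENNReal.ofReal t * ENNReal.ofReal (t⁻¹) := by
          rw [← Real.rpow_mul ht.le]
          norm_num
          rw [mul_inv_cancel₀ hp0.ne', Real.rpow_neg_one]
      _ = ENNReal.ofReal (t * t⁻¹) := (ENNReal.ofReal_mul ht.le).symm
      _ = 1 := by rw [mul_inv_cancel₀ ht.ne', ENNReal.ofReal_one]
  · have hp0 : 0 < p := lt_trans one_pos hp
    have hp1 : 0 < 1/p := by positivity
    have hp1' : 1/p < 1 := by rw [div_lt_one hp0]; exact hp
    set C : ℝ := (2*(3/2:ℝ)^(1-1/p) - 2^(1-1/p) - 1)/(2*(1-1/p)) with hC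
    have hC0 : 0 < C := by
      apply div_pos (gamma_pos (by linarith) (by linarith))
      linarith
    set a : ℕ → ℝ := fun i => (1/2:ℝ)^(i+1) with ha
    set b : ℕ → ℝ := fun i => (1/2:ℝ)^i with hb
    have hbi : ∀ i, b i = 2 * a i := by
      intro i; simp only [ha, hb, pow_succ]; ring
    have hai : ∀ i, 0 < a i := fun i => by positivity
    have hsub : ∀ i, Set.Ioo (a i) (b i) ⊆ Set.Ioo 0 1 := by
      intro i x hx
      refine ⟨lt_trans (hai i) hx.1, lt_of_lt_of_le hx.2 ?_⟩
      exact pow_le_one₀ (by norm_num) (by norm_num)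
    have hdisj : Pairwise (Function.onFun Disjoint fun i => Set.Ioo (a i) (b i)) := by
      have key : ∀ i j : ℕ, i < j → Disjoint (Set.Ioo (a i) (b i)) (Set.Ioo (a j) (b j)) := by
        intro i j hij
        have hba : b j ≤ a i := by
          simp only [ha, hb]
          exact pow_le_pow_of_le_one (by norm_num) (by norm_num) hij
        rw [Set.disjoint_left]
        rintro x ⟨hx1, hx2⟩ ⟨hy1, hy2⟩
        exact absurd (lt_trans hy2 (lt_of_le_of_lt hba hx1)) (lt_irrefl x)
      intro i j hij
      rcases lt_or_gt_of_ne hij with h | h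
      · exact key i j h
      · exact (key j i h).symm
    have htop : jnSum p (fun x : ℝ => x ^ (-(1 / p))) a b = ⊤ := by
      rw [eq_top_iff]
      calc (⊤:ℝ≥0∞) = ∑' (_ : ℕ), ENNReal.ofReal (C ^ p) := by
            rw [ENNReal.tsum_const_eq_top_of_ne_zero]
            exact (ENNReal.ofReal_pos.mpr (Real.rpow_pos_of_pos hC0 p)).ne'
        _ ≤ jnSum p (fun x : ℝ => x ^ (-(1 / p))) a b := by
            apply ENNReal.tsum_le_tsum
            intro i
            have h := key_lb p hp (a i) (hai i)
            rwa [← hbi i] at h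
    rw [eq_top_iff]
    calc (⊤:ℝ≥0∞) = (jnSum p (fun x : ℝ => x ^ (-(1 / p))) a b) ^ (1/p) := by
          rw [htop, ENNReal.top_rpow_of_pos hp1]
      _ ≤ eJN p (Set.Ioo 0 1) (fun x : ℝ => x ^ (-(1 / p))) := by
          apply le_iSup_of_le a
          apply le_iSup_of_le b
          apply le_iSup_of_le hsub
          apply le_iSup_of_le hdisj
          exact le_rfl
end

section
/- Let 1 < p < q < ∞. There exists a monotone function f on (0,1) with ‖f‖_{L^{p,q}((0,1))} < ∞ but ‖f‖_{JN_p((0,1))} = ∞. In particular, L^{p,q}((0,1)) is not contained in JN_p((0,1)) for q ∈ (p,∞). -/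
open MeasureTheory ENNReal

namespace JNP

noncomputable def cc (p : ℝ) (k : ℕ) : ℝ := ((2:ℝ) ^ k / k) ^ (1/p)
noncomputable def Kf (x : ℝ) : ℕ := max 1 ⌊Real.logb 2 x⁻¹⌋₊
noncomputable def ff (p : ℝ) (x : ℝ) : ℝ := cc p (Kf x)


lemma cc_nonneg (p : ℝ) (k : ℕ) : 0 ≤ cc p k := Real.rpow_nonneg (by positivity) _

lemma cc_pos (p : ℝ) {k : ℕ} (hk : 1 ≤ k) : 0 < cc p k := by
  apply Real.rpow_pos_of_pos
  have : (0:ℝ) < k := by exact_mod_cast hk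
  positivity

lemma ff_nonneg (p : ℝ) (x : ℝ) : 0 ≤ ff p x := cc_nonneg p _

lemma Kf_one_le (x : ℝ) : 1 ≤ Kf x := le_max_left _ _

section
variable {p : ℝ} (hp : 1 < p)
include hp

lemma cc_rpow (k : ℕ) : (cc p k) ^ p = (2:ℝ) ^ k / k := by
  rw [cc, one_div, Real.rpow_inv_rpow (by positivity) (by linarith)]

lemma cc_mono {k l : ℕ} (hk : 1 ≤ k) (hkl : k ≤ l) : cc p k ≤ cc p l := by
  apply Real.rpow_le_rpow (by positivity) _ (by positivity)
  obtain ⟨d, rfl⟩ := Nat.exists_eq_add_of_le hkl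
  have hd : d + 1 ≤ 2 ^ d := Nat.lt_two_pow_self
  have key : 2 ^ k * (k + d) ≤ 2 ^ (k + d) * k := by
    rw [pow_add]
    have : k + d ≤ 2 ^ d * k := by nlinarith
    nlinarith [pow_pos (show 0 < 2 by norm_num) k]
  have hk0 : (0:ℝ) < k := by exact_mod_cast hk
  have hl0 : (0:ℝ) < (k + d : ℕ) := by exact_mod_cast Nat.lt_of_lt_of_le hk (Nat.le_add_right _ _)
  rw [div_le_div_iff₀ hk0 hl0]
  calc (2:ℝ) ^ k * ((k + d : ℕ):ℝ) = ((2 ^ k * (k + d) : ℕ) : ℝ) := by push_cast; ring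
    _ ≤ ((2 ^ (k + d) * k : ℕ) : ℝ) := by exact_mod_cast key
    _ = (2:ℝ) ^ (k+d) * k := by push_cast; ring

/-- `cc` doubles at most at each step. -/

lemma cc_succ_le (k : ℕ) (hk : 1 ≤ k) : cc p (k+1) ≤ 2 * cc p k := by
  have hk0 : (0:ℝ) < k := by exact_mod_cast hk
  have hp0 : (0:ℝ) < p := by linarith
  have h2p : (2:ℝ) ≤ (2:ℝ) ^ p := by
    calc (2:ℝ) = (2:ℝ) ^ (1:ℝ) := (Real.rpow_one 2).symm
    _ ≤ (2:ℝ) ^ p := Real.rpow_le_rpow_left_iff one_lt_two |>.mpr hp.le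
  have key : (2:ℝ) ^ (k+1) / (k+1) ≤ (2:ℝ)^p * ((2:ℝ)^k / k) := by
    have hrhs : (2:ℝ)^p * ((2:ℝ)^k/k) = ((2:ℝ)^p * (2:ℝ)^k)/k := by ring
    rw [hrhs, div_le_div_iff₀ (by positivity) hk0, pow_succ]
    have h2k : (0:ℝ) < 2^k := by positivity
    have hA : 2 * (2:ℝ)^k ≤ (2:ℝ)^p * 2^k := mul_le_mul_of_nonneg_right h2p h2k.le
    nlinarith [mul_le_mul_of_nonneg_right hA hk0.le]
  have := Real.rpow_le_rpow (by positivity) key (le_of_lt (by positivity : (0:ℝ) < 1/p))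
  rw [cc, cc]
  push_cast
  refine le_trans this ?_
  rw [Real.mul_rpow (by positivity) (by positivity)]
  rw [one_div, Real.rpow_rpow_inv (by norm_num) (by linarith)]

/-- gap estimate : `cc k ≤ (3/4)^(1/p) * cc (k+1)` for `k ≥ 2`. -/

lemma cc_gap {k : ℕ} (hk : 2 ≤ k) : cc p k ≤ (3/4 : ℝ) ^ (1/p) * cc p (k+1) := by
  have hk0 : (0:ℝ) < k := by exact_mod_cast Nat.lt_of_lt_of_le (by norm_num) hk
  have hkr : (2:ℝ) ≤ k := by exact_mod_cast hk
  have key : (2:ℝ) ^ k / k ≤ (3/4) * ((2:ℝ)^(k+1) / (k+1)) := by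
    have hrhs : (3/4:ℝ) * ((2:ℝ)^(k+1)/(k+1)) = (3 * (2:ℝ)^(k+1) / 4)/(k+1) := by ring
    rw [hrhs, div_le_div_iff₀ hk0 (by positivity), pow_succ]
    have h2k : (0:ℝ) < 2^k := by positivity
    nlinarith
  have := Real.rpow_le_rpow (by positivity) key (by positivity : (0:ℝ) ≤ 1/p)
  rw [cc, cc]
  push_cast
  refine le_trans this ?_
  rw [Real.mul_rpow (by norm_num) (by positivity)]

end

lemma Kf_le {k : ℕ} (hk : 1 ≤ k) {x : ℝ} (h1 : ((2:ℝ) ^ (k+1))⁻¹ < x) : Kf x ≤ k := by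
  have hx : 0 < x := lt_trans (by positivity) h1
  have hxi : 0 < x⁻¹ := by positivity
  have hub : Real.logb 2 x⁻¹ < (k:ℝ) + 1 := by
    rw [Real.logb_lt_iff_lt_rpow one_lt_two hxi]
    have h : ((k:ℝ)+1) = ((k+1 : ℕ):ℝ) := by push_cast; ring
    rw [h, Real.rpow_natCast]
    exact (inv_lt_comm₀ (by positivity) hx).mp h1
  have hfl : ⌊Real.logb 2 x⁻¹⌋₊ ≤ k := by
    by_cases hneg : Real.logb 2 x⁻¹ < 0
    · rw [Nat.floor_of_nonpos hneg.le]; exact Nat.zero_le k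
    · have h2 : ⌊Real.logb 2 x⁻¹⌋₊ < k + 1 := by
        rw [Nat.floor_lt (not_lt.1 hneg)]; exact_mod_cast hub
      omega
  rw [Kf]; exact max_le hk hfl

lemma Kf_eq {k : ℕ} (hk : 1 ≤ k) {x : ℝ} (h1 : ((2:ℝ) ^ (k+1))⁻¹ < x)
    (h2 : x ≤ ((2:ℝ) ^ k)⁻¹) : Kf x = k := by
  have hx : 0 < x := lt_trans (by positivity) h1
  have hxi : 0 < x⁻¹ := by positivity
  have hlb : (k:ℝ) ≤ Real.logb 2 x⁻¹ := by
    rw [Real.le_logb_iff_rpow_le one_lt_two hxi, Real.rpow_natCast]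
    rw [le_inv_comm₀ (by positivity) hx]
    exact h2
  refine le_antisymm (Kf_le hk h1) ?_
  exact le_trans (Nat.le_floor hlb) (le_max_right _ _)

lemma ff_antitoneOn {p : ℝ} (hp : 1 < p) : AntitoneOn (ff p) (Set.Ioo (0:ℝ) 1) := by
  intro x hx y hy hxy
  have hKf : Kf y ≤ Kf x := by
    apply max_le_max le_rfl
    apply Nat.floor_le_floor
    exact Real.logb_le_logb_of_le one_lt_two (inv_pos.mpr hy.1) (inv_anti₀ hx.1 hxy)
  exact cc_mono hp (Kf_one_le y) hKf

section
variable {p : ℝ} (k : ℕ)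

lemma ff_left {x : ℝ} (h1 : 3/(2:ℝ)^(k+3) < x) (h2 : x ≤ 4/(2:ℝ)^(k+3)) :
    ff p x = cc p (k+1) := by
  have e1 : ((2:ℝ)^(k+1+1))⁻¹ = 2/(2:ℝ)^(k+3) := by
    rw [_root_.eq_div_iff (by positivity), inv_mul_eq_div, div_eq_iff (by positivity)]; ring
  have e2 : ((2:ℝ)^(k+1))⁻¹ = 4/(2:ℝ)^(k+3) := by
    rw [_root_.eq_div_iff (by positivity), inv_mul_eq_div, div_eq_iff (by positivity)]; ring
  rw [ff, Kf_eq (by omega) (x := x) (k := k+1) (by rw [e1]; refine lt_of_le_of_lt ?_ h1; gcongr; norm_num) (by rw [e2]; exact h2)]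

lemma ff_right {x : ℝ} (hk : 1 ≤ k) (h1 : 4/(2:ℝ)^(k+3) < x) (h2 : x < 5/(2:ℝ)^(k+3)) :
    ff p x = cc p k := by
  have e2 : ((2:ℝ)^(k+1))⁻¹ = 4/(2:ℝ)^(k+3) := by
    rw [_root_.eq_div_iff (by positivity), inv_mul_eq_div, div_eq_iff (by positivity)]; ring
  have e3 : ((2:ℝ)^k)⁻¹ = 8/(2:ℝ)^(k+3) := by
    rw [_root_.eq_div_iff (by positivity), inv_mul_eq_div, div_eq_iff (by positivity)]; ring
  rw [ff, Kf_eq hk (x := x) (k := k) (by rw [e2]; exact h1) (by rw [e3]; refine le_of_lt (lt_of_lt_of_le h2 ?_); gcongr <;> norm_num)]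

end

lemma setAverage_const_of {s : Set ℝ} (hs : MeasurableSet s) (h0 : volume s ≠ 0)
    (hfin : volume s ≠ ⊤) {g : ℝ → ℝ} {G : ℝ} (h : Set.EqOn g (fun _ => G) s) :
    ⨍ x in s, g x = G := by
  rw [setAverage_eq, setIntegral_congr_fun hs h, setIntegral_const, smul_eq_mul, smul_eq_mul,
    ← mul_assoc, inv_mul_cancel₀, one_mul]
  exact ENNReal.toReal_ne_zero.mpr ⟨h0, hfin⟩

section
variable (p : ℝ) (k : ℕ)

lemma avg_ff (hk : 1 ≤ k) :
    ⨍ x in Set.Ioo (3/(2:ℝ)^(k+3)) (5/(2:ℝ)^(k+3)), ff p x = (cc p (k+1) + cc p k)/2 := by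
  set A := 3/(2:ℝ)^(k+3) with hA
  set M := 4/(2:ℝ)^(k+3) with hM
  set B := 5/(2:ℝ)^(k+3) with hB
  have hd : (0:ℝ) < ((2:ℝ)^(k+3))⁻¹ := by positivity
  set d : ℝ := ((2:ℝ)^(k+3))⁻¹ with hdd
  have hAM : A < M := by rw [hA, hM]; gcongr; norm_num
  have hMB : M < B := by rw [hM, hB]; gcongr; norm_num
  have hMA : M - A = d := by rw [hA, hM, hdd]; ring
  have hBM : B - M = d := by rw [hB, hM, hdd]; ring
  have hBA : B - A = 2*d := by rw [hA, hB, hdd]; ring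
  have hsplit : Set.Ioo A B = Set.Ioc A M ∪ Set.Ioo M B :=
    (Set.Ioc_union_Ioo_eq_Ioo hAM.le hMB).symm
  have hfL : Set.EqOn (ff p) (fun _ => cc p (k+1)) (Set.Ioc A M) :=
    fun x hx => ff_left k hx.1 hx.2
  have hfR : Set.EqOn (ff p) (fun _ => cc p k) (Set.Ioo M B) :=
    fun x hx => ff_right k hk hx.1 hx.2
  have hdisj : Disjoint (Set.Ioc A M) (Set.Ioo M B) := by
    rw [Set.disjoint_left]
    rintro x ⟨_, h2⟩ ⟨h3, _⟩
    exact absurd h2 (not_le.mpr h3)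
  have hIL : IntegrableOn (ff p) (Set.Ioc A M) := by
    refine (integrableOn_const ?_).congr_fun hfL.symm measurableSet_Ioc
    rw [Real.volume_Ioc]; exact ofReal_ne_top
  have hIR : IntegrableOn (ff p) (Set.Ioo M B) := by
    refine (integrableOn_const ?_).congr_fun hfR.symm measurableSet_Ioo
    rw [Real.volume_Ioo]; exact ofReal_ne_top
  have hint : ∫ x in Set.Ioo A B, ff p x = (cc p (k+1) + cc p k) * d := by
    rw [hsplit, setIntegral_union hdisj measurableSet_Ioo hIL hIR,
      setIntegral_congr_fun measurableSet_Ioc hfL, setIntegral_congr_fun measurableSet_Ioo hfR,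
      setIntegral_const, setIntegral_const, Real.volume_real_Ioc_of_le hAM.le, Real.volume_real_Ioo_of_le hMB.le,
      hMA, hBM]
    simp only [smul_eq_mul]
    ring
  rw [setAverage_eq, hint, Real.volume_real_Ioo_of_le (by linarith), hBA, smul_eq_mul]
  field_simp

lemma osc_avg {p : ℝ} (hp : 1 < p) (hk : 1 ≤ k) :
    ⨍ x in Set.Ioo (3/(2:ℝ)^(k+3)) (5/(2:ℝ)^(k+3)),
      |ff p x - ⨍ y in Set.Ioo (3/(2:ℝ)^(k+3)) (5/(2:ℝ)^(k+3)), ff p y|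
      = (cc p (k+1) - cc p k)/2 := by
  have hcc : cc p k ≤ cc p (k+1) := cc_mono hp hk (Nat.le_succ k)
  rw [avg_ff p k hk]
  have hAB : 3/(2:ℝ)^(k+3) < 5/(2:ℝ)^(k+3) := by gcongr; norm_num
  refine setAverage_const_of measurableSet_Ioo ?_ ?_ ?_
  · rw [Real.volume_Ioo]
    simp only [ne_eq, ofReal_eq_zero, not_le]
    linarith
  · rw [Real.volume_Ioo]; exact ofReal_ne_top
  · intro x hx
    simp only
    rcases le_or_gt x (4/(2:ℝ)^(k+3)) with h|h
    · rw [ff_left k hx.1 h, abs_of_nonneg (by linarith)]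
      ring
    · rw [ff_right k hk h hx.2, abs_of_nonpos (by linarith)]
      ring

end

lemma harmonic_shift_top {C : ℝ} (hC : 0 < C) :
    ∑' i : ℕ, ENNReal.ofReal (C / (2*((i:ℝ)+5))) = ⊤ := by
  by_contra h
  have hsum : Summable fun i : ℕ => (ENNReal.ofReal (C / (2*((i:ℝ)+5)))).toReal :=
    ENNReal.summable_toReal h
  have heq : ∀ i : ℕ, (ENNReal.ofReal (C / (2*((i:ℝ)+5)))).toReal = C / (2*((i:ℝ)+5)) := by
    intro i
    rw [toReal_ofReal]
    positivity
  rw [funext heq] at hsum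
  have h2 : Summable fun i : ℕ => ((i:ℝ)+5)⁻¹ := by
    have := hsum.mul_left (2/C)
    refine this.congr fun i => ?_
    field_simp
  have h3 : Summable fun i : ℕ => (((i+5:ℕ)):ℝ)⁻¹ := by
    refine h2.congr fun i => ?_
    push_cast
    ring
  exact Real.not_summable_natCast_inv
    ((summable_nat_add_iff (f := fun n : ℕ => ((n:ℝ))⁻¹) 5).mp h3)

theorem eJN_top {p : ℝ} (hp : 1 < p) : eJN p (Set.Ioo 0 1) (ff p) = ⊤ := by
  have hp0 : (0:ℝ) < p := by linarith
  set a : ℕ → ℝ := fun i => 3/(2:ℝ)^(i+4+3) with ha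
  set b : ℕ → ℝ := fun i => 5/(2:ℝ)^(i+4+3) with hb
  have hsub : ∀ i, Set.Ioo (a i) (b i) ⊆ Set.Ioo (0:ℝ) 1 := by
    intro i x hx
    constructor
    · refine lt_trans ?_ hx.1; positivity
    · refine lt_trans hx.2 ?_
      rw [div_lt_one (by positivity)]
      calc (5:ℝ) < 2^7 := by norm_num
        _ ≤ 2^(i+4+3) := by
          apply pow_le_pow_right₀ one_le_two
          omega
  have hdisjmono : ∀ i j : ℕ, i < j → Disjoint (Set.Ioo (a i) (b i)) (Set.Ioo (a j) (b j)) := by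
    intro i j hij
    have hba : b j ≤ a i := by
      rw [ha, hb]
      simp only
      rw [div_le_div_iff₀ (by positivity) (by positivity)]
      calc (5:ℝ) * 2^(i+4+3) ≤ 6 * 2^(i+4+3) := by nlinarith [pow_pos (show (0:ℝ)<2 by norm_num) (i+4+3)]
        _ = 3 * 2^(i+4+3+1) := by ring
        _ ≤ 3 * 2^(j+4+3) := by
            have : i+4+3+1 ≤ j+4+3 := by omega
            have h2 : (2:ℝ)^(i+4+3+1) ≤ 2^(j+4+3) := pow_le_pow_right₀ one_le_two this
            nlinarith
    rw [Set.disjoint_left]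
    rintro x ⟨h1, _⟩ ⟨_, h4⟩
    exact lt_irrefl x (lt_of_lt_of_le h4 (le_trans hba h1.le))
  have hdisj : Pairwise (Function.onFun Disjoint fun i => Set.Ioo (a i) (b i)) := by
    intro i j hij
    rcases lt_or_gt_of_ne hij with h|h
    · exact hdisjmono i j h
    · exact (hdisjmono j i h).symm
  -- gap bound
  set ε : ℝ := (1 - (3/4:ℝ)^(1/p))/2 with hε
  have hε0 : 0 < ε := by
    rw [hε]
    have : (3/4:ℝ)^(1/p) < 1 :=
      Real.rpow_lt_one (by norm_num) (by norm_num) (by positivity)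
    linarith
  have hterm : ∀ i : ℕ,
      ENNReal.ofReal (ε^p / (2*((i:ℝ)+5))) ≤
        volume (Set.Ioo (a i) (b i)) *
          ENNReal.ofReal ((⨍ x in Set.Ioo (a i) (b i), |ff p x - ⨍ y in Set.Ioo (a i) (b i), ff p y|) ^ p) := by
    intro i
    set k : ℕ := i + 4 with hkdef
    have hk1 : 1 ≤ k := by omega
    have hosc := osc_avg k hp hk1
    have hvol : volume (Set.Ioo (a i) (b i)) = ENNReal.ofReal (2/(2:ℝ)^(k+3)) := by
      rw [Real.volume_Ioo, ha, hb]
      congr 1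
      ring
    have hgap : ε * cc p (k+1) ≤ (cc p (k+1) - cc p k)/2 := by
      have h1 : cc p k ≤ (3/4 : ℝ) ^ (1/p) * cc p (k+1) := cc_gap hp (by omega)
      have h2 : 0 ≤ cc p (k+1) := cc_nonneg p (k+1)
      rw [hε]
      nlinarith
    have hGnn : 0 ≤ ε * cc p (k+1) := mul_nonneg hε0.le (cc_nonneg p _)
    have hGp : (ε * cc p (k+1))^p ≤ ((cc p (k+1) - cc p k)/2)^p :=
      Real.rpow_le_rpow hGnn hgap hp0.le
    have hGpval : (ε * cc p (k+1))^p = ε^p * ((2:ℝ)^(k+1)/(k+1)) := by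
      rw [Real.mul_rpow hε0.le (cc_nonneg p _), cc_rpow hp]
      push_cast
      ring
    have hcomb : ε^p / (2*((i:ℝ)+5)) ≤ 2/(2:ℝ)^(k+3) * ((cc p (k+1) - cc p k)/2)^p := by
      have hle : ε^p / (2*((i:ℝ)+5)) ≤ 2/(2:ℝ)^(k+3) * (ε * cc p (k+1))^p := by
        have hkk : ((k:ℝ)+1) = (i:ℝ)+5 := by rw [hkdef]; push_cast; ring
        have E : 2/(2:ℝ)^(k+3) * (ε^p * ((2:ℝ)^(k+1)/((k:ℝ)+1))) = ε^p/(2*((k:ℝ)+1)) := by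
          have h2k : (0:ℝ) < 2^k := by positivity
          have hknn : (0:ℝ) < (k:ℝ)+1 := by positivity
          field_simp
          ring
        rw [hGpval, E, hkk]
      refine le_trans hle ?_
      have : (0:ℝ) < 2/(2:ℝ)^(k+3) := by positivity
      exact mul_le_mul_of_nonneg_left hGp this.le
    rw [hvol, hosc, ← ENNReal.ofReal_mul (by positivity)]
    exact ENNReal.ofReal_le_ofReal hcomb
  have hjn : jnSum p (ff p) a b = ⊤ := by
    rw [jnSum, eq_top_iff, ← harmonic_shift_top (show (0:ℝ) < ε^p by positivity)]
    exact ENNReal.tsum_le_tsum hterm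
  rw [eq_top_iff, eJN]
  refine le_trans ?_ (le_iSup_of_le a (le_iSup_of_le b (le_iSup_of_le hsub (le_iSup_of_le hdisj le_rfl))))
  rw [hjn, ENNReal.top_rpow_of_pos (by positivity)]

lemma two_pow_ge_sq : ∀ m : ℕ, 4 ≤ m → m^2 ≤ 2^m := by
  intro m hm
  induction m with
  | zero => omega
  | succ n ih =>
    rcases Nat.lt_or_ge n 4 with h|h
    · interval_cases n <;> simp_all <;> omega
    · have h1 := ih (by omega)
      have h2 : 2*n + 1 ≤ n^2 := by nlinarith
      calc (n+1)^2 = n^2 + (2*n+1) := by ring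
        _ ≤ 2^n + 2^n := by omega
        _ = 2^(n+1) := by ring

section
variable {p : ℝ} (hp : 1 < p)
include hp

lemma cc_big {m : ℕ} (hm : 4 ≤ m) : ((m:ℝ)) ^ (1/p) ≤ cc p m := by
  apply Real.rpow_le_rpow (by positivity) _ (by positivity)
  have hm0 : (0:ℝ) < m := by exact_mod_cast Nat.lt_of_lt_of_le (by norm_num) hm
  rw [le_div_iff₀ hm0]
  have := two_pow_ge_sq m hm
  calc (m:ℝ) * m = ((m^2 : ℕ) : ℝ) := by push_cast; ring
    _ ≤ ((2^m : ℕ) : ℝ) := by exact_mod_cast this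
    _ = (2:ℝ)^m := by push_cast; ring

lemma exists_cc_ge (t : ℝ) (ht : 0 < t) : ∃ n : ℕ, t ≤ cc p (n + 4) := by
  refine ⟨⌈t^p⌉₊, ?_⟩
  have h1 : t ^ p ≤ ((⌈t^p⌉₊ + 4 : ℕ) : ℝ) := by
    push_cast
    have := Nat.le_ceil (t^p)
    linarith
  have h2 : t = (t^p)^(1/p) := by
    rw [one_div, Real.rpow_rpow_inv ht.le (by linarith)]
  calc t = (t^p)^(1/p) := h2
    _ ≤ (((⌈t^p⌉₊+4:ℕ):ℝ))^(1/p) := Real.rpow_le_rpow (by positivity) h1 (by positivity)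
    _ ≤ cc p (⌈t^p⌉₊+4) := cc_big hp (Nat.le_add_left 4 _)

lemma covering : Set.Ioi (cc p 1) ⊆ ⋃ j : ℕ, Set.Ioc (cc p (j+1)) (cc p (j+2)) := by
  intro t ht
  simp only [Set.mem_Ioi] at ht
  have ht0 : 0 < t := lt_trans (cc_pos p le_rfl) ht
  classical
  -- least n with t ≤ cc p (n+2)
  have hex : ∃ n : ℕ, t ≤ cc p (n + 2) := by
    obtain ⟨n, hn⟩ := exists_cc_ge hp t ht0
    exact ⟨n + 2, hn⟩
  let n₀ := Nat.find hex
  have hspec : t ≤ cc p (n₀ + 2) := Nat.find_spec hex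
  simp only [Set.mem_iUnion, Set.mem_Ioc]
  cases hn : n₀ with
  | zero =>
    refine ⟨0, ht, ?_⟩
    rw [hn] at hspec
    exact hspec
  | succ m =>
    refine ⟨m + 1, ?_, ?_⟩
    · have := Nat.find_min hex (m := m) (by omega)
      exact lt_of_not_ge this
    · rw [hn] at hspec
      exact hspec

lemma measure_bound {k : ℕ} (hk : 1 ≤ k) {t : ℝ} (ht : cc p k ≤ t) :
    {x ∈ Set.Ioo (0:ℝ) 1 | t < |ff p x|} ⊆ Set.Ioc 0 (((2:ℝ)^(k+1))⁻¹) := by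
  rintro x ⟨hx, hfx⟩
  refine ⟨hx.1, ?_⟩
  by_contra h
  push_neg at h
  have hKf : Kf x ≤ k := Kf_le hk h
  have : ff p x ≤ cc p k := cc_mono hp (Kf_one_le x) hKf
  rw [abs_of_nonneg (ff_nonneg p x)] at hfx
  linarith

end

section
variable {p q : ℝ} (hp : 1 < p) (hpq : p < q)
include hp hpq

theorem lorentz_lt_top :
    (∫⁻ t in Set.Ioi (0 : ℝ),
        (ENNReal.ofReal t * volume {x ∈ Set.Ioo (0 : ℝ) 1 | t < |ff p x|} ^ (1 / p)) ^ q *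
          (ENNReal.ofReal t)⁻¹) < ⊤ := by
  have hq1 : 1 < q := lt_trans hp hpq
  have hq0 : (0:ℝ) < q := by linarith
  set ψ : ℝ → ℝ≥0∞ := fun t =>
    (ENNReal.ofReal t * volume {x ∈ Set.Ioo (0 : ℝ) 1 | t < |ff p x|} ^ (1 / p)) ^ q *
      (ENNReal.ofReal t)⁻¹ with hψ
  have hc1 : 0 < cc p 1 := cc_pos p le_rfl
  -- part A
  have hA : (∫⁻ t in Set.Ioc (0:ℝ) (cc p 1), ψ t) < ⊤ := by
    have hbound : ∀ t ∈ Set.Ioc (0:ℝ) (cc p 1), ψ t ≤ ENNReal.ofReal (cc p 1) ^ (q - 1) := by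
      intro t ht
      have ht0 : 0 < t := ht.1
      have hne0 : ENNReal.ofReal t ≠ 0 := (ENNReal.ofReal_pos.mpr ht0).ne'
      have hμ : volume {x ∈ Set.Ioo (0 : ℝ) 1 | t < |ff p x|} ≤ 1 := by
        refine le_trans (measure_mono (Set.sep_subset _ _)) ?_
        rw [Real.volume_Ioo]
        simp
      have h1 : ENNReal.ofReal t * volume {x ∈ Set.Ioo (0 : ℝ) 1 | t < |ff p x|} ^ (1/p)
          ≤ ENNReal.ofReal t := by
        calc ENNReal.ofReal t * volume {x ∈ Set.Ioo (0 : ℝ) 1 | t < |ff p x|} ^ (1/p)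
            ≤ ENNReal.ofReal t * 1 ^ (1/p) :=
              mul_le_mul_right (ENNReal.rpow_le_rpow hμ (by positivity)) _
          _ = ENNReal.ofReal t := by rw [ENNReal.one_rpow, mul_one]
      calc ψ t ≤ (ENNReal.ofReal t) ^ q * (ENNReal.ofReal t)⁻¹ := by
            rw [hψ]
            exact mul_le_mul_left (ENNReal.rpow_le_rpow h1 hq0.le) _
        _ = (ENNReal.ofReal t) ^ (q - 1) := by
            rw [← ENNReal.rpow_neg_one (ENNReal.ofReal t),
              ← ENNReal.rpow_add q (-1) hne0 ofReal_ne_top]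
            congr 1
        _ ≤ ENNReal.ofReal (cc p 1) ^ (q - 1) :=
            ENNReal.rpow_le_rpow (ENNReal.ofReal_le_ofReal ht.2) (by linarith)
    calc (∫⁻ t in Set.Ioc (0:ℝ) (cc p 1), ψ t)
        ≤ ∫⁻ _ in Set.Ioc (0:ℝ) (cc p 1), ENNReal.ofReal (cc p 1) ^ (q - 1) :=
          setLIntegral_mono' measurableSet_Ioc hbound
      _ = ENNReal.ofReal (cc p 1) ^ (q - 1) * volume (Set.Ioc (0:ℝ) (cc p 1)) :=
          setLIntegral_const _ _
      _ < ⊤ := by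
          apply ENNReal.mul_lt_top
          · exact ENNReal.rpow_lt_top_of_nonneg (by linarith) ofReal_ne_top
          · rw [Real.volume_Ioc]; exact ofReal_lt_top
  -- part B blocks
  have hB : ∀ k : ℕ, 1 ≤ k → (∫⁻ t in Set.Ioc (cc p k) (cc p (k+1)), ψ t)
      ≤ ENNReal.ofReal ((((k+1:ℕ):ℝ))⁻¹ ^ (1/p)) ^ q := by
    intro k hk
    have hck : 0 < cc p k := cc_pos p hk
    set C : ℝ≥0∞ := ENNReal.ofReal ((((k+1:ℕ):ℝ))⁻¹ ^ (1/p)) ^ q with hC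
    have hbound : ∀ t ∈ Set.Ioc (cc p k) (cc p (k+1)), ψ t ≤ C * (ENNReal.ofReal t)⁻¹ := by
      intro t ht
      have ht0 : 0 < t := lt_trans hck ht.1
      have hμ : volume {x ∈ Set.Ioo (0 : ℝ) 1 | t < |ff p x|}
          ≤ ENNReal.ofReal (((2:ℝ)^(k+1))⁻¹) := by
        refine le_trans (measure_mono (measure_bound hp hk ht.1.le)) ?_
        rw [Real.volume_Ioc]
        simp
      have hreal : cc p (k+1) * (((2:ℝ)^(k+1))⁻¹) ^ (1/p) = (((k+1:ℕ):ℝ))⁻¹ ^ (1/p) := by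
        rw [cc, ← Real.mul_rpow (by positivity) (by positivity)]
        congr 1
        push_cast
        field_simp
      have h1 : ENNReal.ofReal t * volume {x ∈ Set.Ioo (0 : ℝ) 1 | t < |ff p x|} ^ (1/p)
          ≤ ENNReal.ofReal ((((k+1:ℕ):ℝ))⁻¹ ^ (1/p)) := by
        calc ENNReal.ofReal t * volume {x ∈ Set.Ioo (0 : ℝ) 1 | t < |ff p x|} ^ (1/p)
            ≤ ENNReal.ofReal (cc p (k+1)) * (ENNReal.ofReal (((2:ℝ)^(k+1))⁻¹)) ^ (1/p) :=
              mul_le_mul' (ENNReal.ofReal_le_ofReal ht.2) (ENNReal.rpow_le_rpow hμ (by positivity))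
          _ = ENNReal.ofReal (cc p (k+1)) * ENNReal.ofReal ((((2:ℝ)^(k+1))⁻¹) ^ (1/p)) := by
              rw [← ENNReal.ofReal_rpow_of_pos (by positivity)]
          _ = ENNReal.ofReal (cc p (k+1) * (((2:ℝ)^(k+1))⁻¹) ^ (1/p)) := by
              rw [← ENNReal.ofReal_mul (cc_nonneg p _)]
          _ = ENNReal.ofReal ((((k+1:ℕ):ℝ))⁻¹ ^ (1/p)) := by rw [hreal]
      rw [hψ, hC]
      exact mul_le_mul_left (ENNReal.rpow_le_rpow h1 hq0.le) _
    have hg : Measurable fun t : ℝ => (ENNReal.ofReal t)⁻¹ :=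
      (ENNReal.measurable_ofReal.comp measurable_id).inv
    calc (∫⁻ t in Set.Ioc (cc p k) (cc p (k+1)), ψ t)
        ≤ ∫⁻ t in Set.Ioc (cc p k) (cc p (k+1)), C * (ENNReal.ofReal t)⁻¹ :=
          setLIntegral_mono' measurableSet_Ioc hbound
      _ = C * ∫⁻ t in Set.Ioc (cc p k) (cc p (k+1)), (ENNReal.ofReal t)⁻¹ :=
          lintegral_const_mul C hg
      _ ≤ C * ((ENNReal.ofReal (cc p k))⁻¹ * volume (Set.Ioc (cc p k) (cc p (k+1)))) := by
          apply mul_le_mul_right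
          calc (∫⁻ t in Set.Ioc (cc p k) (cc p (k+1)), (ENNReal.ofReal t)⁻¹)
              ≤ ∫⁻ _ in Set.Ioc (cc p k) (cc p (k+1)), (ENNReal.ofReal (cc p k))⁻¹ := by
                refine setLIntegral_mono' measurableSet_Ioc fun t ht => ?_
                exact ENNReal.inv_le_inv' (ENNReal.ofReal_le_ofReal ht.1.le)
            _ = (ENNReal.ofReal (cc p k))⁻¹ * volume (Set.Ioc (cc p k) (cc p (k+1))) :=
                setLIntegral_const _ _
      _ ≤ C * ((ENNReal.ofReal (cc p k))⁻¹ * ENNReal.ofReal (cc p k)) := by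
          apply mul_le_mul_right
          apply mul_le_mul_right
          rw [Real.volume_Ioc]
          apply ENNReal.ofReal_le_ofReal
          have := cc_succ_le hp k hk
          linarith
      _ = C := by
          rw [ENNReal.inv_mul_cancel (ENNReal.ofReal_pos.mpr hck).ne' ofReal_ne_top, mul_one]
  -- summability of block bounds
  have hsum : (∑' j : ℕ, ENNReal.ofReal ((((j+2:ℕ):ℝ))⁻¹ ^ (1/p)) ^ q) < ⊤ := by
    have hqp : 1 < q / p := (one_lt_div (by linarith)).mpr hpq
    have heq : ∀ j : ℕ, ENNReal.ofReal ((((j+2:ℕ):ℝ))⁻¹ ^ (1/p)) ^ q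
        = ENNReal.ofReal ((((j:ℝ)+2) ^ (q/p))⁻¹) := by
      intro j
      rw [ENNReal.ofReal_rpow_of_nonneg (by positivity) hq0.le]
      congr 1
      have hcast : (((j+2:ℕ):ℝ)) = ((j:ℝ)+2) := by push_cast; ring
      have hx : (0:ℝ) < (j:ℝ)+2 := by positivity
      rw [hcast, Real.inv_rpow hx.le, Real.inv_rpow (Real.rpow_nonneg hx.le _),
        ← Real.rpow_mul hx.le, show (1/p)*q = q/p by ring]
    have hsummable : Summable (fun j : ℕ => ((((j:ℝ)+2) ^ (q/p))⁻¹)) := by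
      have h0 : Summable (fun n : ℕ => ((n:ℝ) ^ (q/p))⁻¹) := Real.summable_nat_rpow_inv.mpr hqp
      have h1 := (summable_nat_add_iff (f := fun n : ℕ => ((n:ℝ) ^ (q/p))⁻¹) 2).mpr h0
      refine h1.congr fun j => ?_
      push_cast
      ring
    calc (∑' j : ℕ, ENNReal.ofReal ((((j+2:ℕ):ℝ))⁻¹ ^ (1/p)) ^ q)
        = ∑' j : ℕ, ENNReal.ofReal ((((j:ℝ)+2) ^ (q/p))⁻¹) := tsum_congr heq
      _ = ENNReal.ofReal (∑' j : ℕ, (((j:ℝ)+2) ^ (q/p))⁻¹) :=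
          (ENNReal.ofReal_tsum_of_nonneg (fun j => by positivity) hsummable).symm
      _ < ⊤ := ofReal_lt_top
  -- assembly
  have hB' : (∫⁻ t in Set.Ioi (cc p 1), ψ t) < ⊤ := by
    calc (∫⁻ t in Set.Ioi (cc p 1), ψ t)
        ≤ ∫⁻ t in ⋃ j : ℕ, Set.Ioc (cc p (j+1)) (cc p (j+2)), ψ t :=
          lintegral_mono_set (covering hp)
      _ ≤ ∑' j : ℕ, ∫⁻ t in Set.Ioc (cc p (j+1)) (cc p (j+2)), ψ t :=
          lintegral_iUnion_le _ _
      _ ≤ ∑' j : ℕ, ENNReal.ofReal ((((j+2:ℕ):ℝ))⁻¹ ^ (1/p)) ^ q :=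
          ENNReal.tsum_le_tsum fun j => hB (j+1) (by omega)
      _ < ⊤ := hsum
  calc (∫⁻ t in Set.Ioi (0:ℝ), ψ t)
      = ∫⁻ t in Set.Ioc (0:ℝ) (cc p 1) ∪ Set.Ioi (cc p 1), ψ t := by
        rw [Set.Ioc_union_Ioi_eq_Ioi hc1.le]
    _ ≤ (∫⁻ t in Set.Ioc (0:ℝ) (cc p 1), ψ t) + ∫⁻ t in Set.Ioi (cc p 1), ψ t :=
        lintegral_union_le _ _ _
    _ < ⊤ := ENNReal.add_lt_top.mpr ⟨hA, hB'⟩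

end

end JNP

/-- For `1 < p < q < ∞` there is a monotone function on `(0,1)` with finite Lorentz
`L^{p,q}((0,1))` quasinorm but infinite `JN_p((0,1))` norm; hence
`L^{p,q}((0,1)) ⊄ JN_p((0,1))`. -/
theorem exists_monotone_Lorentz_not_JNp (p q : ℝ) (hp : 1 < p) (hpq : p < q) :
    ∃ f : ℝ → ℝ, (MonotoneOn f (Set.Ioo 0 1) ∨ AntitoneOn f (Set.Ioo 0 1)) ∧
      (∫⁻ t in Set.Ioi (0 : ℝ),
          (ENNReal.ofReal t * volume {x ∈ Set.Ioo (0 : ℝ) 1 | t < |f x|} ^ (1 / p)) ^ q *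
            (ENNReal.ofReal t)⁻¹) < ⊤ ∧
      eJN p (Set.Ioo 0 1) f = ⊤ := by
  exact ⟨JNP.ff p, Or.inr (JNP.ff_antitoneOn hp), JNP.lorentz_lt_top hp hpq, JNP.eJN_top hp⟩
end

section
/- Let Q ⊂ ℝ^d be a cube and 1 < p ≤ q < ∞. Then for every f ∈ L^q(Q): |Q|^{1/p − 1/q} ‖f − ⟨f⟩_Q‖_{L^q(Q)} ≤ ‖f‖_{JN_{p,q}(Q)}, and there is a constant C = C(p,q) such that ‖f‖_{JN_{p,q}(Q)} ≤ C |Q|^{1/p − 1/q} ‖f‖_{L^q(Q)}. In particular JN_{p,q}(Q) = L^q(Q) as sets. -/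
open MeasureTheory ENNReal

/-- The axis-parallel cube in `ℝ^d` with lower corner `c` and side length `h`
(empty if `h ≤ 0`). -/
noncomputable def cube {d : ℕ} (c : Fin d → ℝ) (h : ℝ) : Set (Fin d → ℝ) :=
  Set.univ.pi fun i => Set.Ico (c i) (c i + h)

lemma cube_measurableSet {d : ℕ} (c : Fin d → ℝ) (h : ℝ) : MeasurableSet (cube c h) :=
  MeasurableSet.univ_pi fun _ => measurableSet_Ico

lemma volume_cube {d : ℕ} (c : Fin d → ℝ) (h : ℝ) :
    volume (cube c h) = ENNReal.ofReal h ^ d := by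
  rw [cube, volume_pi_pi]
  simp [Real.volume_Ico]

lemma volume_cube_ne_top {d : ℕ} (c : Fin d → ℝ) (h : ℝ) : volume (cube c h) ≠ ∞ := by
  rw [volume_cube]; exact ENNReal.pow_ne_top ENNReal.ofReal_ne_top

variable {α : Type*} [MeasurableSpace α] {μ : Measure α}

lemma ofReal_setAverage_rpow {q : ℝ} (hq : 1 ≤ q) {s : Set α}
    (hs0 : μ s ≠ 0) (hst : μ s ≠ ∞) {g : α → ℝ}
    (hg : MemLp g (ENNReal.ofReal q) (μ.restrict s)) :
    ENNReal.ofReal (⨍ x in s, |g x| ^ q ∂μ) =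
      (μ s)⁻¹ * eLpNorm g (ENNReal.ofReal q) (μ.restrict s) ^ q := by
  have hq0 : 0 < q := lt_of_lt_of_le one_pos hq
  have hP0 : (ENNReal.ofReal q) ≠ 0 := by
    simp only [ne_eq, ENNReal.ofReal_eq_zero, not_le]; linarith
  have hPt : (ENNReal.ofReal q) ≠ ∞ := ENNReal.ofReal_ne_top
  have hPtoReal : (ENNReal.ofReal q).toReal = q := ENNReal.toReal_ofReal hq0.le
  have hint : Integrable (fun x => |g x| ^ q) (μ.restrict s) := by
    have := hg.integrable_norm_rpow hP0 hPt
    simpa [hPtoReal, Real.norm_eq_abs] using this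
  have h1 : ENNReal.ofReal (∫ x in s, |g x| ^ q ∂μ) = ∫⁻ x in s, (‖g x‖₊ : ℝ≥0∞) ^ q ∂μ := by
    rw [ofReal_integral_eq_lintegral_ofReal hint
      (Filter.Eventually.of_forall fun x => Real.rpow_nonneg (abs_nonneg _) q)]
    refine lintegral_congr fun x => ?_
    rw [← ENNReal.ofReal_rpow_of_nonneg (abs_nonneg _) hq0.le, ← enorm_eq_nnnorm, Real.enorm_eq_ofReal_abs]
  rw [setAverage_eq, measureReal_def, smul_eq_mul,
    ENNReal.ofReal_mul (inv_nonneg.2 ENNReal.toReal_nonneg), h1,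
    ENNReal.ofReal_inv_of_pos (ENNReal.toReal_pos hs0 hst), ENNReal.ofReal_toReal hst,
    eLpNorm_eq_lintegral_rpow_enorm_toReal hP0 hPt, hPtoReal, ← ENNReal.rpow_mul, one_div,
    inv_mul_cancel₀ hq0.ne', ENNReal.rpow_one]
  rfl

lemma eLpNorm_sub_setAverage_le {q : ℝ} (hq : 1 ≤ q) {s : Set α}
    (hs0 : μ s ≠ 0) (hst : μ s ≠ ∞) {g : α → ℝ}
    (hg : MemLp g (ENNReal.ofReal q) (μ.restrict s)) :
    eLpNorm (fun x => g x - ⨍ y in s, g y ∂μ) (ENNReal.ofReal q) (μ.restrict s) ≤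
      2 * eLpNorm g (ENNReal.ofReal q) (μ.restrict s) := by
  have hq0 : 0 < q := lt_of_lt_of_le one_pos hq
  have hP0 : (ENNReal.ofReal q) ≠ 0 := by
    simp only [ne_eq, ENNReal.ofReal_eq_zero, not_le]; linarith
  have hP1 : (1 : ℝ≥0∞) ≤ ENNReal.ofReal q := by
    rw [← ENNReal.ofReal_one]; exact ENNReal.ofReal_le_ofReal hq
  set ν := μ.restrict s with hν
  have hν0 : ν ≠ 0 := by rw [hν, ne_eq, Measure.restrict_eq_zero]; exact hs0
  set c : ℝ := ⨍ y in s, g y ∂μ with hc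
  have htri : eLpNorm (fun x => g x - c) (ENNReal.ofReal q) ν ≤
      eLpNorm g (ENNReal.ofReal q) ν + eLpNorm (fun _ : α => c) (ENNReal.ofReal q) ν := by
    exact eLpNorm_sub_le hg.aestronglyMeasurable aestronglyMeasurable_const hP1
  have hconst : eLpNorm (fun _ : α => c) (ENNReal.ofReal q) ν ≤
      eLpNorm g (ENNReal.ofReal q) ν := by
    rw [eLpNorm_const c hP0 hν0]
    have hνuniv : ν Set.univ = μ s := Measure.restrict_apply_univ s
    have hPtoReal : (ENNReal.ofReal q).toReal = q := ENNReal.toReal_ofReal hq0.le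
    have hcbound : (‖c‖₊ : ℝ≥0∞) ≤
        (μ s)⁻¹ * (eLpNorm g (ENNReal.ofReal q) ν * μ s ^ (1 - 1/q)) := by
      have h1 : (‖c‖₊ : ℝ≥0∞) = (μ s)⁻¹ * (‖∫ y in s, g y ∂μ‖₊ : ℝ≥0∞) := by
        rw [hc, setAverage_eq, measureReal_def, smul_eq_mul, ← enorm_eq_nnnorm, Real.enorm_eq_ofReal_abs, abs_mul,
          ENNReal.ofReal_mul (abs_nonneg _), abs_of_nonneg (inv_nonneg.2 ENNReal.toReal_nonneg),
          ENNReal.ofReal_inv_of_pos (ENNReal.toReal_pos hs0 hst), ENNReal.ofReal_toReal hst,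
          ← Real.enorm_eq_ofReal_abs]
        rfl
      rw [h1]
      refine mul_le_mul_right ?_ _
      calc (‖∫ y in s, g y ∂μ‖₊ : ℝ≥0∞) ≤ ∫⁻ y in s, (‖g y‖₊ : ℝ≥0∞) ∂μ :=
            enorm_integral_le_lintegral_enorm _
        _ = eLpNorm g 1 ν := by rw [eLpNorm_one_eq_lintegral_enorm]; rfl
        _ ≤ eLpNorm g (ENNReal.ofReal q) ν * ν Set.univ ^ (1/(1:ℝ≥0∞).toReal - 1/(ENNReal.ofReal q).toReal) :=
            eLpNorm_le_eLpNorm_mul_rpow_measure_univ hP1 hg.aestronglyMeasurable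
        _ = eLpNorm g (ENNReal.ofReal q) ν * μ s ^ (1 - 1/q) := by
            rw [hνuniv, ENNReal.toReal_one, hPtoReal]; norm_num
    calc (‖c‖₊ : ℝ≥0∞) * ν Set.univ ^ (1 / (ENNReal.ofReal q).toReal)
        ≤ (μ s)⁻¹ * (eLpNorm g (ENNReal.ofReal q) ν * μ s ^ (1 - 1/q)) * μ s ^ (1/q) := by
          rw [hνuniv, hPtoReal]; exact mul_le_mul_left hcbound _
      _ = eLpNorm g (ENNReal.ofReal q) ν * ((μ s)⁻¹ * (μ s ^ (1 - 1/q) * μ s ^ (1/q))) := by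
          ring
      _ = eLpNorm g (ENNReal.ofReal q) ν := by
          rw [← ENNReal.rpow_add _ _ hs0 hst]
          norm_num
          rw [ENNReal.inv_mul_cancel hs0 hst, mul_one]
  calc eLpNorm (fun x => g x - c) (ENNReal.ofReal q) ν ≤ _ := htri
    _ ≤ eLpNorm g (ENNReal.ofReal q) ν + eLpNorm g (ENNReal.ofReal q) ν :=
        add_le_add_right hconst _
    _ = 2 * eLpNorm g (ENNReal.ofReal q) ν := (two_mul _).symm

lemma term_le {p q : ℝ} (hp : 1 < p) (hpq : p ≤ q) {s : Set α}
    (hst : μ s ≠ ∞) {g : α → ℝ} (hg : MemLp g (ENNReal.ofReal q) (μ.restrict s)) :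
    μ s * ENNReal.ofReal ((⨍ x in s, |g x - ⨍ y in s, g y ∂μ| ^ q ∂μ) ^ (p / q)) ≤
      2 ^ p * (μ s ^ (1 - p / q) * (∫⁻ x in s, (‖g x‖₊ : ℝ≥0∞) ^ q ∂μ) ^ (p / q)) := by
  by_cases hs0 : μ s = 0
  · simp [hs0]
  · have hq : 1 ≤ q := le_trans hp.le hpq
    have hq0 : 0 < q := by linarith
    have hp0 : 0 < p := by linarith
    have hθ0 : 0 < p / q := div_pos hp0 hq0
    have hP0 : (ENNReal.ofReal q) ≠ 0 := by
      simp only [ne_eq, ENNReal.ofReal_eq_zero, not_le]; linarith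
    have hPt : (ENNReal.ofReal q) ≠ ∞ := ENNReal.ofReal_ne_top
    have hPtoReal : (ENNReal.ofReal q).toReal = q := ENNReal.toReal_ofReal hq0.le
    haveI : IsFiniteMeasure (μ.restrict s) :=
      ⟨by rwa [Measure.restrict_apply_univ, lt_top_iff_ne_top]⟩
    have hgs : MemLp (fun x => g x - ⨍ y in s, g y ∂μ) (ENNReal.ofReal q) (μ.restrict s) :=
      hg.sub (memLp_const _)
    have hA : 0 ≤ ⨍ x in s, |g x - ⨍ y in s, g y ∂μ| ^ q ∂μ := by
      rw [setAverage_eq, smul_eq_mul]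
      exact mul_nonneg (inv_nonneg.2 ENNReal.toReal_nonneg)
        (integral_nonneg fun x => Real.rpow_nonneg (abs_nonneg _) q)
    set M := eLpNorm (fun x => g x - ⨍ y in s, g y ∂μ) (ENNReal.ofReal q) (μ.restrict s) with hM
    set N := eLpNorm g (ENNReal.ofReal q) (μ.restrict s) with hN
    have hqθ : q * (p / q) = p := by field_simp
    have hofA : ENNReal.ofReal ((⨍ x in s, |g x - ⨍ y in s, g y ∂μ| ^ q ∂μ) ^ (p / q)) =
        ((μ s)⁻¹) ^ (p / q) * M ^ p := by
      rw [← ENNReal.ofReal_rpow_of_nonneg hA hθ0.le,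
        ofReal_setAverage_rpow hq hs0 hst hgs,
        ENNReal.mul_rpow_of_nonneg _ _ hθ0.le, ← ENNReal.rpow_mul, hqθ]
    have hMN : M ^ p ≤ 2 ^ p * N ^ p := by
      calc M ^ p ≤ (2 * N) ^ p :=
            ENNReal.rpow_le_rpow (eLpNorm_sub_setAverage_le hq hs0 hst hg) hp0.le
        _ = 2 ^ p * N ^ p := ENNReal.mul_rpow_of_nonneg _ _ hp0.le
    have hNp : N ^ p = (∫⁻ x in s, (‖g x‖₊ : ℝ≥0∞) ^ q ∂μ) ^ (p / q) := by
      rw [hN, eLpNorm_eq_lintegral_rpow_enorm_toReal hP0 hPt, hPtoReal, ← ENNReal.rpow_mul]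
      congr 1
      field_simp
    calc μ s * ENNReal.ofReal ((⨍ x in s, |g x - ⨍ y in s, g y ∂μ| ^ q ∂μ) ^ (p / q))
        = μ s * ((μ s)⁻¹ ^ (p / q) * M ^ p) := by rw [hofA]
      _ = μ s ^ (1 - p / q) * M ^ p := by
          rw [ENNReal.inv_rpow, ← mul_assoc, ENNReal.rpow_sub _ _ hs0 hst, ENNReal.rpow_one,
            ENNReal.div_eq_inv_mul, mul_comm ((μ s ^ (p / q))⁻¹) (μ s)]
      _ ≤ μ s ^ (1 - p / q) * (2 ^ p * N ^ p) := mul_le_mul_right hMN _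
      _ = 2 ^ p * (μ s ^ (1 - p / q) * (∫⁻ x in s, (‖g x‖₊ : ℝ≥0∞) ^ q ∂μ) ^ (p / q)) := by
          rw [hNp, mul_left_comm]

lemma tsum_weighted_holder {θ : ℝ} (hθ0 : 0 < θ) (hθ1 : θ ≤ 1) (V I : ℕ → ℝ≥0∞) :
    ∑' n, V n ^ (1 - θ) * I n ^ θ ≤ (∑' n, V n) ^ (1 - θ) * (∑' n, I n) ^ θ := by
  rcases eq_or_lt_of_le hθ1 with h1 | h1
  · subst h1; simp
  · have h1θ : 0 < 1 - θ := by linarith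
    have hc : (1 / (1 - θ)).HolderConjugate (1 / θ) := by
      refine Real.holderConjugate_iff.mpr ⟨?_, ?_⟩
      · rw [lt_div_iff₀ h1θ]; linarith
      · rw [one_div, one_div, inv_inv, inv_inv]; ring
    have key := ENNReal.lintegral_mul_le_Lp_mul_Lq Measure.count hc
      (f := fun n : ℕ => V n ^ (1 - θ)) (g := fun n : ℕ => I n ^ θ)
      (measurable_of_countable _).aemeasurable (measurable_of_countable _).aemeasurable
    simp only [lintegral_count, Pi.mul_apply] at key
    calc ∑' n, V n ^ (1 - θ) * I n ^ θ
        ≤ (∑' n, (V n ^ (1 - θ)) ^ (1 / (1 - θ))) ^ (1 / (1 / (1 - θ))) *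
          (∑' n, (I n ^ θ) ^ (1 / θ)) ^ (1 / (1 / θ)) := key
      _ = (∑' n, V n) ^ (1 - θ) * (∑' n, I n) ^ θ := by
          rw [one_div_one_div, one_div_one_div]
          congr 2
          · refine tsum_congr fun n => ?_
            rw [← ENNReal.rpow_mul, mul_one_div, div_self h1θ.ne', ENNReal.rpow_one]
          · refine tsum_congr fun n => ?_
            rw [← ENNReal.rpow_mul, mul_one_div, div_self hθ0.ne', ENNReal.rpow_one]
/-- The generalized John–Nirenberg `JN_{p,q}` norm of `f` on the cube `Q₀ ⊆ ℝ^d`: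
the `p`-th root of the supremum of `Σᵢ |Qᵢ| (⨍_{Qᵢ} |f − ⟨f⟩_{Qᵢ}|^q)^{p/q}` over all
countable collections of pairwise disjoint subcubes `Qᵢ` of `Q₀`.
For `q = 1` this is the `JN_p` norm. -/
noncomputable def eJNpq (p q : ℝ) {d : ℕ} (Q₀ : Set (Fin d → ℝ)) (f : (Fin d → ℝ) → ℝ) :
    ℝ≥0∞ :=
  ⨆ (c : ℕ → Fin d → ℝ) (h : ℕ → ℝ) (_ : ∀ n, cube (c n) (h n) ⊆ Q₀)
    (_ : Pairwise (Function.onFun Disjoint fun n => cube (c n) (h n))),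
    (∑' n, volume (cube (c n) (h n)) *
      ENNReal.ofReal
        ((⨍ x in cube (c n) (h n), |f x - ⨍ y in cube (c n) (h n), f y| ^ q) ^ (p / q))) ^
      (1 / p)

/-- For `1 < p ≤ q < ∞` and a cube `Q ⊆ ℝ^d`:
`|Q|^{1/p−1/q} ‖f − ⟨f⟩_Q‖_{L^q(Q)} ≤ ‖f‖_{JN_{p,q}(Q)}`, and there is `C = C(p,q)`
with `‖f‖_{JN_{p,q}(Q)} ≤ C |Q|^{1/p−1/q} ‖f‖_{L^q(Q)}`; so `JN_{p,q}(Q) = L^q(Q)`. -/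
theorem JNpq_eq_Lq_of_le (p q : ℝ) (hp : 1 < p) (hpq : p ≤ q) :
    (∀ (d : ℕ) (c₀ : Fin d → ℝ) (ℓ : ℝ), 0 < ℓ →
      ∀ f : (Fin d → ℝ) → ℝ,
        MemLp f (ENNReal.ofReal q) (volume.restrict (cube c₀ ℓ)) →
        volume (cube c₀ ℓ) ^ (1 / p - 1 / q) *
            eLpNorm (fun x => f x - ⨍ y in cube c₀ ℓ, f y) (ENNReal.ofReal q)
              (volume.restrict (cube c₀ ℓ))
          ≤ eJNpq p q (cube c₀ ℓ) f) ∧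
    ∃ C : ℝ, 0 < C ∧ ∀ (d : ℕ) (c₀ : Fin d → ℝ) (ℓ : ℝ), 0 < ℓ →
      ∀ f : (Fin d → ℝ) → ℝ,
        MemLp f (ENNReal.ofReal q) (volume.restrict (cube c₀ ℓ)) →
        eJNpq p q (cube c₀ ℓ) f ≤
          ENNReal.ofReal C * (volume (cube c₀ ℓ) ^ (1 / p - 1 / q) *
            eLpNorm f (ENNReal.ofReal q) (volume.restrict (cube c₀ ℓ))) := by
  have hq : 1 ≤ q := le_trans hp.le hpq
  have hq0 : 0 < q := by linarith
  have hp0 : 0 < p := by linarith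
  have hθ0 : 0 < p / q := div_pos hp0 hq0
  have hθ1 : p / q ≤ 1 := (div_le_one hq0).2 hpq
  have hP0 : (ENNReal.ofReal q) ≠ 0 := by
    simp only [ne_eq, ENNReal.ofReal_eq_zero, not_le]; linarith
  have hPt : (ENNReal.ofReal q) ≠ ∞ := ENNReal.ofReal_ne_top
  have hPtoReal : (ENNReal.ofReal q).toReal = q := ENNReal.toReal_ofReal hq0.le
  have hqθ : q * (p / q) = p := by field_simp
  constructor
  · intro d c₀ ℓ hℓ f hf
    by_cases hd : d = 0
    · subst hd
      have hcube : cube c₀ ℓ = Set.univ := by ext x; simp [cube]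
      have hv : volume (Set.univ : Set (Fin 0 → ℝ)) = 1 := by
        rw [← hcube, volume_cube]; simp
      have havg : (⨍ y in cube c₀ ℓ, f y) = f default := by
        rw [hcube, setAverage_eq, Measure.restrict_univ, integral_unique, measureReal_def, hv]
        simp
        exact congrArg f (Subsingleton.elim _ _)
      have hzero : (fun x : Fin 0 → ℝ => f x - ⨍ y in cube c₀ ℓ, f y) = fun _ => (0 : ℝ) := by
        funext x
        rw [havg, Subsingleton.elim x default, sub_self]
      rw [hzero, eLpNorm_zero', mul_zero]
      exact zero_le
    · set V := volume (cube c₀ ℓ) with hV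
      have hVt : V ≠ ∞ := volume_cube_ne_top _ _
      have hV0 : V ≠ 0 := by
        rw [hV, volume_cube]
        exact pow_ne_zero _ (by simp [ENNReal.ofReal_eq_zero]; linarith)
      haveI : IsFiniteMeasure (volume.restrict (cube c₀ ℓ)) :=
        ⟨by rwa [Measure.restrict_apply_univ, lt_top_iff_ne_top]⟩
      have hneg : ∀ c : Fin d → ℝ, cube c (-1 : ℝ) = (∅ : Set (Fin d → ℝ)) := by
        intro c
        ext x
        simp only [cube, Set.mem_univ_pi, Set.mem_Ico, Set.mem_empty_iff_false, iff_false,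
          not_forall]
        exact ⟨⟨0, Nat.pos_of_ne_zero hd⟩, fun h => by linarith [h.1, h.2]⟩
      set H : ℕ → ℝ := fun n => if n = 0 then ℓ else -1 with hHdef
      have hH0 : cube c₀ (H 0) = cube c₀ ℓ := by simp [hHdef]
      have hHempty : ∀ n : ℕ, n ≠ 0 → cube c₀ (H n) = ∅ := by
        intro n hn
        rw [hHdef]
        simp only [hn, if_false]
        exact hneg c₀
      have hsub : ∀ n, cube ((fun _ => c₀) n) (H n) ⊆ cube c₀ ℓ := by
        intro n
        rcases eq_or_ne n 0 with rfl | hn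
        · rw [hH0]
        · rw [hHempty n hn]; exact Set.empty_subset _
      have hdisj : Pairwise (Function.onFun Disjoint fun n => cube ((fun _ => c₀) n) (H n)) := by
        intro n m hnm
        rcases eq_or_ne m 0 with rfl | hm
        · have hn : n ≠ 0 := hnm
          show Disjoint (cube c₀ (H n)) (cube c₀ (H 0))
          rw [hHempty n hn]
          exact Set.empty_disjoint _
        · show Disjoint (cube c₀ (H n)) (cube c₀ (H m))
          rw [hHempty m hm]
          exact Set.disjoint_empty _
      rw [eJNpq]
      refine le_trans ?_ (le_iSup_of_le (fun _ => c₀) (le_iSup_of_le H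
        (le_iSup_of_le hsub (le_iSup_of_le hdisj le_rfl))))
      have hterm : V * ENNReal.ofReal
            ((⨍ x in cube c₀ ℓ, |f x - ⨍ y in cube c₀ ℓ, f y| ^ q) ^ (p / q)) ≤
          ∑' n, volume (cube ((fun _ => c₀) n) (H n)) * ENNReal.ofReal
            ((⨍ x in cube ((fun _ => c₀) n) (H n),
              |f x - ⨍ y in cube ((fun _ => c₀) n) (H n), f y| ^ q) ^ (p / q)) := by
        have h := ENNReal.le_tsum (a := 0)
          (f := fun n => volume (cube ((fun _ => c₀) n) (H n)) * ENNReal.ofReal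
            ((⨍ x in cube ((fun _ => c₀) n) (H n),
              |f x - ⨍ y in cube ((fun _ => c₀) n) (H n), f y| ^ q) ^ (p / q)))
        simpa [hH0] using h
      refine le_trans ?_ (ENNReal.rpow_le_rpow hterm (by positivity : (0:ℝ) ≤ 1 / p))
      conv_rhs => rw [one_div]
      rw [ENNReal.le_rpow_inv_iff hp0]
      refine le_of_eq ?_
      set M := eLpNorm (fun x => f x - ⨍ y in cube c₀ ℓ, f y) (ENNReal.ofReal q)
        (volume.restrict (cube c₀ ℓ)) with hM
      have hgs : MemLp (fun x => f x - ⨍ y in cube c₀ ℓ, f y) (ENNReal.ofReal q)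
          (volume.restrict (cube c₀ ℓ)) := hf.sub (memLp_const _)
      have hA : 0 ≤ ⨍ x in cube c₀ ℓ, |f x - ⨍ y in cube c₀ ℓ, f y| ^ q := by
        rw [setAverage_eq, smul_eq_mul]
        exact mul_nonneg (inv_nonneg.2 ENNReal.toReal_nonneg)
          (integral_nonneg fun x => Real.rpow_nonneg (abs_nonneg _) q)
      have hofA : ENNReal.ofReal
            ((⨍ x in cube c₀ ℓ, |f x - ⨍ y in cube c₀ ℓ, f y| ^ q) ^ (p / q)) =
          V⁻¹ ^ (p / q) * M ^ p := by
        rw [← ENNReal.ofReal_rpow_of_nonneg hA hθ0.le,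
          ofReal_setAverage_rpow hq hV0 hVt hgs,
          ENNReal.mul_rpow_of_nonneg _ _ hθ0.le, ← ENNReal.rpow_mul, hqθ]
      have hexp : (1 / p - 1 / q) * p = 1 - p / q := by field_simp
      calc (V ^ (1 / p - 1 / q) * M) ^ p
          = V ^ ((1 / p - 1 / q) * p) * M ^ p := by
            rw [ENNReal.mul_rpow_of_nonneg _ _ hp0.le, ← ENNReal.rpow_mul]
        _ = V ^ (1 - p / q) * M ^ p := by rw [hexp]
        _ = V * (V⁻¹ ^ (p / q) * M ^ p) := by
            rw [ENNReal.inv_rpow, ENNReal.rpow_sub _ _ hV0 hVt, ENNReal.rpow_one,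
              ENNReal.div_eq_inv_mul, mul_comm ((V ^ (p / q))⁻¹) V, mul_assoc]
        _ = V * ENNReal.ofReal
              ((⨍ x in cube c₀ ℓ, |f x - ⨍ y in cube c₀ ℓ, f y| ^ q) ^ (p / q)) := by
            rw [hofA]
  · refine ⟨2, by norm_num, ?_⟩
    intro d c₀ ℓ hℓ f hf
    set V := volume (cube c₀ ℓ) with hV
    have hVt : V ≠ ∞ := volume_cube_ne_top _ _
    set J := ∫⁻ x in cube c₀ ℓ, (‖f x‖₊ : ℝ≥0∞) ^ q with hJ
    have hN : eLpNorm f (ENNReal.ofReal q) (volume.restrict (cube c₀ ℓ)) = J ^ (1 / q) := by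
      rw [eLpNorm_eq_lintegral_rpow_enorm_toReal hP0 hPt, hPtoReal]
      rfl
    rw [eJNpq]
    refine iSup_le fun cc => iSup_le fun hh => iSup_le fun hsub => iSup_le fun hdisj => ?_
    have hstep : ∀ n : ℕ,
        volume (cube (cc n) (hh n)) * ENNReal.ofReal
          ((⨍ x in cube (cc n) (hh n), |f x - ⨍ y in cube (cc n) (hh n), f y| ^ q) ^ (p / q)) ≤
        2 ^ p * (volume (cube (cc n) (hh n)) ^ (1 - p / q) *
          (∫⁻ x in cube (cc n) (hh n), (‖f x‖₊ : ℝ≥0∞) ^ q) ^ (p / q)) := by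
      intro n
      exact term_le hp hpq (volume_cube_ne_top _ _)
        (hf.mono_measure (Measure.restrict_mono (hsub n) le_rfl))
    have hVsum : ∑' n, volume (cube (cc n) (hh n)) ≤ V := by
      rw [← measure_iUnion hdisj fun n => cube_measurableSet _ _]
      exact measure_mono (Set.iUnion_subset hsub)
    have hJsum : ∑' n, ∫⁻ x in cube (cc n) (hh n), (‖f x‖₊ : ℝ≥0∞) ^ q ≤ J := by
      rw [← lintegral_iUnion (fun n => cube_measurableSet _ _) hdisj]
      exact lintegral_mono_set (Set.iUnion_subset hsub)
    have hsum : (∑' n, volume (cube (cc n) (hh n)) * ENNReal.ofReal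
          ((⨍ x in cube (cc n) (hh n), |f x - ⨍ y in cube (cc n) (hh n), f y| ^ q) ^ (p / q))) ≤
        2 ^ p * (V ^ (1 - p / q) * J ^ (p / q)) :=
      calc _ ≤ ∑' n, 2 ^ p * (volume (cube (cc n) (hh n)) ^ (1 - p / q) *
            (∫⁻ x in cube (cc n) (hh n), (‖f x‖₊ : ℝ≥0∞) ^ q) ^ (p / q)) :=
          ENNReal.tsum_le_tsum hstep
        _ = 2 ^ p * ∑' n, volume (cube (cc n) (hh n)) ^ (1 - p / q) *
            (∫⁻ x in cube (cc n) (hh n), (‖f x‖₊ : ℝ≥0∞) ^ q) ^ (p / q) :=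
          ENNReal.tsum_mul_left
        _ ≤ 2 ^ p * ((∑' n, volume (cube (cc n) (hh n))) ^ (1 - p / q) *
            (∑' n, ∫⁻ x in cube (cc n) (hh n), (‖f x‖₊ : ℝ≥0∞) ^ q) ^ (p / q)) :=
          mul_le_mul_right (tsum_weighted_holder hθ0 hθ1 _ _) _
        _ ≤ 2 ^ p * (V ^ (1 - p / q) * J ^ (p / q)) := by
          refine mul_le_mul_right (mul_le_mul' ?_ ?_) _
          · exact ENNReal.rpow_le_rpow hVsum (by linarith)
          · exact ENNReal.rpow_le_rpow hJsum hθ0.le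
    calc _ ≤ (2 ^ p * (V ^ (1 - p / q) * J ^ (p / q))) ^ (1 / p) :=
        ENNReal.rpow_le_rpow hsum (by positivity)
      _ = ENNReal.ofReal 2 * (V ^ (1 / p - 1 / q) *
          eLpNorm f (ENNReal.ofReal q) (volume.restrict (cube c₀ ℓ))) := by
        rw [hN, ENNReal.mul_rpow_of_nonneg _ _ (by positivity : (0:ℝ) ≤ 1 / p),
          ENNReal.mul_rpow_of_nonneg _ _ (by positivity : (0:ℝ) ≤ 1 / p),
          ← ENNReal.rpow_mul, ← ENNReal.rpow_mul, ← ENNReal.rpow_mul]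
        congr 2
        · rw [mul_one_div, div_self hp0.ne', ENNReal.rpow_one, ENNReal.ofReal_ofNat]
        · field_simp
        · congr 1
          field_simp
end

section
/- Let 1 < r < s ≤ ∞ with conjugate exponents r' = r/(r−1) and s' = s/(s−1), and let Q₀ ⊂ ℝ^d be a cube. Let f ∈ L^{s'}(Q₀) satisfy ‖f‖_{JN_{r',s'}(Q₀)} < ∞. Let (Q_j) be a countable family of pairwise disjoint subcubes of Q₀ and a_j ∈ L^s(Q_j) mean-zero functions supported in Q_j. Then Σ_j |∫_{Q_j} f a_j| ≤ ‖f‖_{JN_{r',s'}(Q₀)} · (Σ_j |Q_j| (⨍_{Q_j}|a_j|^s)^{r/s})^{1/r}, the series converging absolutely whenever the right-hand side is finite. -/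
open MeasureTheory ENNReal

/-- The `(r,s)`-atomic quantity `|Q| (⨍_Q |a|^s)^{r/s}` attached to an atom `a`
supported on a cube `Q` (for `s = ∞` the average `(⨍_Q |a|^s)^{1/s}` is replaced by
`ess sup_Q |a|`), expressed via the `L^s(Q)` norm as
`|Q| (‖a‖_{L^s(Q)} |Q|^{-1/s})^r`. -/
noncomputable def polyTerm (r : ℝ) (s : ℝ≥0∞) {d : ℕ} (Q : Set (Fin d → ℝ))
    (a : (Fin d → ℝ) → ℝ) : ℝ≥0∞ :=
  volume Q * (eLpNorm a s (volume.restrict Q) * volume Q ^ (-(s.toReal)⁻¹)) ^ r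

lemma cube_volume_ne_top {d : ℕ} (c : Fin d → ℝ) (h : ℝ) : volume (cube c h) ≠ ⊤ := by
  rw [cube, volume_pi_pi]
  exact (ENNReal.prod_lt_top fun i _ => by simp [Real.volume_Ico]).ne

/-- Pairing bound: let `1 < r < s ≤ ∞`, `1/s + 1/s' = 1`, `r' = r/(r−1)`, and let
`f ∈ L^{s'}(Q₀)` with `‖f‖_{JN_{r',s'}(Q₀)} < ∞`. For mean-zero atoms `a_j ∈ L^s(Q_j)`
supported in pairwise disjoint subcubes `Q_j ⊆ Q₀`,
`Σ_j |∫_{Q_j} f a_j| ≤ ‖f‖_{JN_{r',s'}(Q₀)} (Σ_j |Q_j| (⨍_{Q_j}|a_j|^s)^{r/s})^{1/r}`. -/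
theorem JNp_pairing_bound (d : ℕ) (r : ℝ) (s s' : ℝ≥0∞) (hr : 1 < r)
    (hs : ENNReal.ofReal r < s) (hconj : 1 / s + 1 / s' = 1)
    (c₀ : Fin d → ℝ) (ℓ : ℝ) (hℓ : 0 < ℓ)
    (f : (Fin d → ℝ) → ℝ) (hf : MemLp f s' (volume.restrict (cube c₀ ℓ)))
    (hJN : eJNpq (r / (r - 1)) s'.toReal (cube c₀ ℓ) f < ⊤)
    (Qc : ℕ → Fin d → ℝ) (Qh : ℕ → ℝ)
    (hsub : ∀ j, cube (Qc j) (Qh j) ⊆ cube c₀ ℓ)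
    (hdisj : Pairwise (Function.onFun Disjoint fun j => cube (Qc j) (Qh j)))
    (a : ℕ → (Fin d → ℝ) → ℝ)
    (hsupp : ∀ j, ∀ x ∉ cube (Qc j) (Qh j), a j x = 0)
    (hmem : ∀ j, MemLp (a j) s (volume.restrict (cube (Qc j) (Qh j))))
    (hmean : ∀ j, (∫ x in cube (Qc j) (Qh j), a j x) = 0) :
    ∑' j, ENNReal.ofReal |∫ x in cube (Qc j) (Qh j), f x * a j x| ≤
      eJNpq (r / (r - 1)) s'.toReal (cube c₀ ℓ) f *
        (∑' j, polyTerm r s (cube (Qc j) (Qh j)) (a j)) ^ (1 / r) := by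
  have hpr : (r / (r - 1)).HolderConjugate r :=
    ((Real.holderConjugate_iff_eq_conjExponent hr).mpr rfl).symm
  set p := r / (r - 1) with hpdef
  -- basic exponent facts
  have hofr : (1 : ℝ≥0∞) < ENNReal.ofReal r := ENNReal.one_lt_ofReal.mpr hr
  have hs1 : (1 : ℝ≥0∞) < s := lt_trans hofr hs
  have hs0 : s ≠ 0 := (lt_trans zero_lt_one hs1).ne'
  have hsinv_lt : 1 / s < 1 := by rw [one_div]; exact ENNReal.inv_lt_one.mpr hs1
  have hsinv_ne_top : 1 / s ≠ ∞ := (lt_of_lt_of_le hsinv_lt le_top).ne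
  have hs'inv : 1 / s' = 1 - 1 / s := by
    refine ENNReal.eq_sub_of_add_eq hsinv_ne_top ?_
    rw [add_comm]; exact hconj
  have hs'inv_pos : 0 < 1 / s' := by rw [hs'inv]; exact tsub_pos_of_lt hsinv_lt
  have hs'_ne_top : s' ≠ ∞ := by
    intro h; rw [h] at hs'inv_pos; simp at hs'inv_pos
  have hs'1 : 1 ≤ s' := by
    have h1 : 1 / s' ≤ 1 := by rw [hs'inv]; exact tsub_le_self
    rw [one_div] at h1; exact ENNReal.inv_le_one.mp h1
  have hs'0 : s' ≠ 0 := (lt_of_lt_of_le zero_lt_one hs'1).ne'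
  set q := s'.toReal with hqdef
  have hq1 : 1 ≤ q := by
    have := ENNReal.toReal_mono hs'_ne_top hs'1; simpa using this
  have hq0 : 0 < q := lt_of_lt_of_le one_pos hq1
  have hinvsum : (s.toReal)⁻¹ + q⁻¹ = 1 := by
    rcases eq_or_ne s ∞ with h | h
    · have h1 : 1 / s' = 1 := by rw [hs'inv, h]; simp
      rw [one_div] at h1
      have hs'eq : s' = 1 := by simpa using congrArg (·⁻¹) h1
      simp [hqdef, hs'eq, h]
    · have := congrArg ENNReal.toReal hconj
      rw [one_div, one_div, ENNReal.toReal_add (by simp [hs0]) (by simp [hs'0]),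
        ENNReal.toReal_inv, ENNReal.toReal_inv] at this
      simpa [hqdef] using this
  have hp0 : p ≠ 0 := hpr.ne_zero
  have hr0 : r ≠ 0 := hpr.symm.ne_zero
  set Q : ℕ → Set (Fin d → ℝ) := fun j => cube (Qc j) (Qh j) with hQdef
  set A : ℕ → ℝ≥0∞ := fun n =>
    volume (Q n) * ENNReal.ofReal
      ((⨍ x in Q n, |f x - ⨍ y in Q n, f y| ^ q) ^ (p / q)) with hAdef
  set B : ℕ → ℝ≥0∞ := fun j => polyTerm r s (Q j) (a j) with hBdef
  -- pointwise bound
  have key : ∀ j, ENNReal.ofReal |∫ x in Q j, f x * a j x| ≤ A j ^ (1 / p) * B j ^ (1 / r) := by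
    intro j
    by_cases hvol : volume (Q j) = 0
    · rw [show volume.restrict (Q j) = 0 from Measure.restrict_eq_zero.mpr hvol]
      simp
    set μ := volume.restrict (Q j) with hμdef
    set T := volume (Q j) with hTdef
    have hT0 : T ≠ 0 := hvol
    have hTtop : T ≠ ⊤ := cube_volume_ne_top _ _
    haveI : IsFiniteMeasure μ :=
      ⟨by rw [hμdef, Measure.restrict_apply_univ]; exact lt_top_iff_ne_top.mpr hTtop⟩
    have hfQ : MemLp f s' μ := hf.mono_measure (Measure.restrict_mono (hsub j) le_rfl)
    set c := ⨍ y in Q j, f y with hcdef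
    have hfc : MemLp (fun x => f x - c) s' μ := hfQ.sub (memLp_const c)
    have hfi : Integrable f μ := hfQ.integrable hs'1
    have hai : Integrable (a j) μ := (hmem j).integrable hs1.le
    have hfa : Integrable (fun x => f x * a j x) μ := by
      have h1 : (1 : ℝ≥0∞) / 1 = 1 / s' + 1 / s := by
        rw [one_div_one, add_comm ((1 : ℝ≥0∞) / s') (1 / s)]; exact hconj.symm
      haveI : HolderTriple s' s 1 := ⟨by simpa [one_div] using h1.symm⟩
      have := ((hmem j).smul (φ := f) (r := 1) hfQ)
      rw [memLp_one_iff_integrable] at this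
      exact this
    have hca : Integrable (fun x => c * a j x) μ := hai.const_mul c
    have hfca : Integrable (fun x => (f x - c) * a j x) μ := by
      have := hfa.sub hca
      refine this.congr (Filter.Eventually.of_forall fun x => ?_)
      simp only [Pi.sub_apply]; ring
    have hsubint : (∫ x, f x * a j x ∂μ) = ∫ x, (f x - c) * a j x ∂μ := by
      simp only [sub_mul]
      rw [integral_sub hfa hca, integral_const_mul]
      have hm : (∫ x, a j x ∂μ) = 0 := hmean j
      rw [hm]; ring
    set Nf := eLpNorm (fun x => f x - c) s' μ with hNfdef
    set Na := eLpNorm (a j) s μ with hNadef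
    have habs : ENNReal.ofReal |∫ x, f x * a j x ∂μ| ≤ Nf * Na := by
      rw [hsubint]
      have h1 : ENNReal.ofReal |∫ x, (f x - c) * a j x ∂μ| ≤
          eLpNorm (fun x => (f x - c) * a j x) 1 μ := by
        rw [eLpNorm_one_eq_lintegral_enorm, ← ofReal_integral_norm_eq_lintegral_enorm hfca]
        apply ENNReal.ofReal_le_ofReal
        calc |∫ x, (f x - c) * a j x ∂μ| ≤ ∫ x, ‖(f x - c) * a j x‖ ∂μ := by
              rw [← Real.norm_eq_abs]; exact norm_integral_le_integral_norm _
          _ = ∫ x, ‖(f x - c) * a j x‖ ∂μ := rfl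
      refine h1.trans ?_
      have hconj1 : (1 : ℝ≥0∞) / 1 = 1 / s' + 1 / s := by
        rw [one_div_one, add_comm ((1 : ℝ≥0∞) / s') (1 / s)]; exact hconj.symm
      haveI : HolderTriple s' s 1 := ⟨by simpa [one_div] using hconj1.symm⟩
      have := eLpNorm_smul_le_mul_eLpNorm (μ := μ) (f := a j) (φ := fun x => f x - c)
        (p := s') (q := s) (r := 1) (hmem j).1 hfc.1
      exact this
    -- compute L^q quantities
    set L := ∫⁻ x, (‖f x - c‖₊ : ℝ≥0∞) ^ q ∂μ with hLdef
    have hNfL : Nf = L ^ (1 / q) := by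
      rw [hNfdef, eLpNorm_eq_lintegral_rpow_enorm_toReal hs'0 hs'_ne_top]
      simp only [enorm_eq_nnnorm, hLdef, hqdef]
    have havg : ENNReal.ofReal ((⨍ x in Q j, |f x - c| ^ q) ^ (p / q)) =
        (T⁻¹ * L) ^ (p / q) := by
      have hint2 : Integrable (fun x => |f x - c| ^ q) μ := by
        have := hfc.integrable_norm_rpow hs'0 hs'_ne_top
        simpa [Real.norm_eq_abs] using this
      have hI_nonneg : 0 ≤ ∫ x, |f x - c| ^ q ∂μ :=
        integral_nonneg fun x => by positivity
      have hofI : ENNReal.ofReal (∫ x, |f x - c| ^ q ∂μ) = L := by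
        rw [ofReal_integral_eq_lintegral_ofReal hint2
          (Filter.Eventually.of_forall fun x => by positivity)]
        refine lintegral_congr fun x => ?_
        rw [← Real.norm_eq_abs, ← ENNReal.ofReal_rpow_of_nonneg (norm_nonneg _) hq0.le,
          ofReal_norm_eq_enorm, enorm_eq_nnnorm]
      have havg2 : (⨍ x in Q j, |f x - c| ^ q) = (T.toReal)⁻¹ * ∫ x, |f x - c| ^ q ∂μ := by
        rw [setAverage_eq]; simp [hTdef, smul_eq_mul, measureReal_def]
        exact Or.inl rfl
      rw [havg2, ← ENNReal.ofReal_rpow_of_nonneg (by positivity)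
        (div_nonneg hpr.nonneg hq0.le)]
      congr 1
      rw [ENNReal.ofReal_mul (by positivity), hofI,
        ENNReal.ofReal_inv_of_pos (ENNReal.toReal_pos hT0 hTtop), ENNReal.ofReal_toReal hTtop]
    have hF1 : A j ^ (1 / p) = T ^ (1 / p) * (T ^ (-(q⁻¹)) * L ^ (1 / q)) := by
      rw [hAdef]
      simp only []
      have he : p / q * (1 / p) = 1 / q := by field_simp
      rw [← hcdef, havg, ENNReal.mul_rpow_of_nonneg _ _ hpr.one_div_nonneg,
        ← ENNReal.rpow_mul, he,
        ENNReal.mul_rpow_of_nonneg _ _ (one_div_nonneg.mpr hq0.le),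
        ← ENNReal.rpow_neg_one T, ← ENNReal.rpow_mul]
      norm_num
      rfl
    have hF2 : B j ^ (1 / r) = T ^ (1 / r) * (Na * T ^ (-(s.toReal)⁻¹)) := by
      rw [hBdef]
      simp only [polyTerm]
      rw [ENNReal.mul_rpow_of_nonneg _ _ hpr.symm.one_div_nonneg, ← ENNReal.rpow_mul,
        mul_one_div_cancel hr0, ENNReal.rpow_one]
    have hTpow : T ^ (1 / p) * T ^ (-(q⁻¹)) * (T ^ (1 / r) * T ^ (-(s.toReal)⁻¹)) = 1 := by
      rw [← ENNReal.rpow_add _ _ hT0 hTtop, ← ENNReal.rpow_add _ _ hT0 hTtop,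
        ← ENNReal.rpow_add _ _ hT0 hTtop]
      have : 1 / p + -q⁻¹ + (1 / r + -(s.toReal)⁻¹) = 0 := by
        have h1 := hpr.inv_add_inv_eq_one
        rw [one_div, one_div]; linarith [hinvsum]
      rw [this, ENNReal.rpow_zero]
    calc ENNReal.ofReal |∫ x, f x * a j x ∂μ| ≤ Nf * Na := habs
      _ = L ^ (1 / q) * Na *
          (T ^ (1 / p) * T ^ (-(q⁻¹)) * (T ^ (1 / r) * T ^ (-(s.toReal)⁻¹))) := by
          rw [hTpow, mul_one, hNfL]
      _ = A j ^ (1 / p) * B j ^ (1 / r) := by rw [hF1, hF2]; ring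
  -- Hölder for sums
  have h2 : ∑' j, A j ^ (1 / p) * B j ^ (1 / r) ≤
      (∑' j, A j) ^ (1 / p) * (∑' j, B j) ^ (1 / r) := by
    have hh := ENNReal.lintegral_mul_le_Lp_mul_Lq (Measure.count : Measure ℕ) hpr
      (f := fun j => A j ^ (1 / p)) (g := fun j => B j ^ (1 / r))
      (measurable_of_countable _).aemeasurable (measurable_of_countable _).aemeasurable
    simp only [Pi.mul_apply, lintegral_count, ← ENNReal.rpow_mul,
      one_div_mul_cancel hp0, one_div_mul_cancel hr0, ENNReal.rpow_one] at hh
    exact hh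
  -- the JN sup bound
  have h3 : (∑' n, A n) ^ (1 / p) ≤ eJNpq p q (cube c₀ ℓ) f := by
    rw [eJNpq, hAdef]
    exact le_iSup_of_le Qc <| le_iSup_of_le Qh <| le_iSup_of_le hsub <|
      le_iSup_of_le hdisj le_rfl
  calc ∑' j, ENNReal.ofReal |∫ x in Q j, f x * a j x|
      ≤ ∑' j, A j ^ (1 / p) * B j ^ (1 / r) := ENNReal.tsum_le_tsum key
    _ ≤ (∑' j, A j) ^ (1 / p) * (∑' j, B j) ^ (1 / r) := h2
    _ ≤ eJNpq p q (cube c₀ ℓ) f * (∑' j, B j) ^ (1 / r) := mul_le_mul_left h3 _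
end
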